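/- arXiv:1905.13194 — 9 statements merged into one kernel-verified Lean document; each statement's English description precedes it below -/
import Mathlib

section
/- Let f, f' be strictly positive continuous functions on a compact set X and suppose f(x₀) = f'(x₀) = 1 for some fixed point x₀ ∈ X. Then (1/2) d_H(f, f') ≤ ‖log f − log f'‖_∞ ≤ d_H(f, f'). -/
/-- Hilbert projective metric on strictly positive continuous functions on `X`. -/
noncomputable def hilbertDist {E : Type*} (X : Set E) (f f' : E → ℝ) : ℝ :=
  Real.log (sSup {r : ℝ | ∃ x ∈ X, ∃ y ∈ X, r = f x * f' y / (f y * f' x)})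

/-- Sup-norm of a function over the set `X`. -/
noncomputable def supNormOn {E : Type*} (X : Set E) (g : E → ℝ) : ℝ :=
  sSup {r : ℝ | ∃ x ∈ X, r = |g x|}

theorem supNorm_log_between_hilbertDist
    (d : ℕ) (X : Set (Fin d → ℝ)) (hX : IsCompact X) (hne : X.Nonempty)
    (x₀ : Fin d → ℝ) (hx₀ : x₀ ∈ X)
    (f f' : (Fin d → ℝ) → ℝ)
    (hf : ContinuousOn f X) (hf' : ContinuousOn f' X)
    (hfpos : ∀ x ∈ X, 0 < f x) (hf'pos : ∀ x ∈ X, 0 < f' x)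
    (hf0 : f x₀ = 1) (hf'0 : f' x₀ = 1) :
    (1/2) * hilbertDist X f f' ≤
        supNormOn X (fun x => Real.log (f x) - Real.log (f' x)) ∧
      supNormOn X (fun x => Real.log (f x) - Real.log (f' x)) ≤
        hilbertDist X f f' := by
  set g : (Fin d → ℝ) → ℝ := fun x => Real.log (f x) - Real.log (f' x) with hg
  have hgc : ContinuousOn g X :=
    (hf.log (fun x hx => (hfpos x hx).ne')).sub (hf'.log (fun x hx => (hf'pos x hx).ne'))
  obtain ⟨xM, hxM, hM⟩ := hX.exists_isMaxOn hne hgc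
  obtain ⟨xm, hxm, hm⟩ := hX.exists_isMinOn hne hgc
  have hg0 : g x₀ = 0 := by simp [hg, hf0, hf'0]
  have hmle : g xm ≤ 0 := by have : g xm ≤ g x₀ := hm hx₀; linarith [hg0.le, hg0.ge]
  have hMge : 0 ≤ g xM := by have : g x₀ ≤ g xM := hM hx₀; linarith [hg0.le, hg0.ge]
  have hratio : ∀ x ∈ X, ∀ y ∈ X, f x * f' y / (f y * f' x) = Real.exp (g x - g y) := by
    intro x hx y hy
    have h1 : Real.exp (g x - g y) = (f x / f' x) / (f y / f' y) := by
      simp only [hg]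
      rw [show Real.log (f x) - Real.log (f' x) - (Real.log (f y) - Real.log (f' y))
            = (Real.log (f x) - Real.log (f' x)) - (Real.log (f y) - Real.log (f' y)) by ring,
        Real.exp_sub, Real.exp_sub, Real.exp_sub, Real.exp_log (hfpos x hx),
        Real.exp_log (hf'pos x hx), Real.exp_log (hfpos y hy), Real.exp_log (hf'pos y hy)]
    rw [h1]
    field_simp
  have hub : ∀ r ∈ {r : ℝ | ∃ x ∈ X, ∃ y ∈ X, r = f x * f' y / (f y * f' x)},
      r ≤ Real.exp (g xM - g xm) := by
    rintro r ⟨x, hx, y, hy, rfl⟩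
    rw [hratio x hx y hy]
    exact Real.exp_le_exp.2 (sub_le_sub (hM hx : g _ ≤ g xM) (hm hy : g xm ≤ g _))
  have hSsup : sSup {r : ℝ | ∃ x ∈ X, ∃ y ∈ X, r = f x * f' y / (f y * f' x)}
      = Real.exp (g xM - g xm) := by
    apply le_antisymm
    · exact csSup_le ⟨_, x₀, hx₀, x₀, hx₀, rfl⟩ hub
    · exact le_csSup ⟨Real.exp (g xM - g xm), hub⟩ ⟨xM, hxM, xm, hxm, (hratio xM hxM xm hxm).symm⟩
  have hH : hilbertDist X f f' = g xM - g xm := by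
    rw [hilbertDist, hSsup, Real.log_exp]
  have habs : ∀ x ∈ X, |g x| ≤ g xM - g xm := by
    intro x hx
    rw [abs_le]
    constructor
    · have h1 : g xm ≤ g x := hm hx; linarith
    · have h1 : g x ≤ g xM := hM hx; linarith
  have hTbdd : BddAbove {r : ℝ | ∃ x ∈ X, r = |g x|} := by
    refine ⟨g xM - g xm, ?_⟩
    rintro r ⟨x, hx, rfl⟩
    exact habs x hx
  have hN : supNormOn X g = supNormOn X (fun x => Real.log (f x) - Real.log (f' x)) := rfl
  have h2 : supNormOn X g ≤ g xM - g xm := by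
    rw [supNormOn]
    refine csSup_le ⟨|g x₀|, ⟨x₀, hx₀, rfl⟩⟩ ?_
    rintro r ⟨x, hx, rfl⟩
    exact habs x hx
  have hMleN : g xM ≤ supNormOn X g :=
    le_trans (le_abs_self _) (le_csSup hTbdd ⟨xM, hxM, rfl⟩)
  have hmleN : -g xm ≤ supNormOn X g :=
    le_trans (neg_le_abs _) (le_csSup hTbdd ⟨xm, hxm, rfl⟩)
  clear_value g
  constructor
  · rw [hH]; linarith
  · rw [hH]; exact h2
end

section
/- Let X be compact, c : X × X → ℝ continuous with 0 ≤ c ≤ D, ε > 0, k(x,y) = exp(−c(x,y)/ε), and let α be a Borel probability measure on X. Define (L_α f)(x) = ∫ k(x,z) f(z) dα(z). Then L_α maps nonnegative continuous functions into the cone K = { f continuous, f ≥ 0 : f(x) ≤ f(y) e^{D/ε} for all x, y ∈ X }. -/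
open MeasureTheory

theorem L_alpha_maps_into_cone
    (d : ℕ) (X : Set (Fin d → ℝ)) (hX : IsCompact X) (hne : X.Nonempty)
    (D ε : ℝ) (hD : 0 ≤ D) (hε : 0 < ε)
    (c : (Fin d → ℝ) → (Fin d → ℝ) → ℝ)
    (hc : Continuous fun p : (Fin d → ℝ) × (Fin d → ℝ) => c p.1 p.2)
    (hcsym : ∀ x y, c x y = c y x)
    (hc0 : ∀ x ∈ X, ∀ y ∈ X, 0 ≤ c x y)
    (hcD : ∀ x ∈ X, ∀ y ∈ X, c x y ≤ D)
    (α : Measure (Fin d → ℝ)) [IsProbabilityMeasure α] (hα : α X = 1)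
    (f : (Fin d → ℝ) → ℝ) (hf : ContinuousOn f X) (hfnn : ∀ x ∈ X, 0 ≤ f x) :
    ContinuousOn (fun x => ∫ z in X, Real.exp (-(c x z) / ε) * f z ∂α) X ∧
    (∀ x ∈ X, 0 ≤ ∫ z in X, Real.exp (-(c x z) / ε) * f z ∂α) ∧
    (∀ x ∈ X, ∀ y ∈ X,
      (∫ z in X, Real.exp (-(c x z) / ε) * f z ∂α) ≤
        (∫ z in X, Real.exp (-(c y z) / ε) * f z ∂α) * Real.exp (D / ε)) := by
  have hXm : MeasurableSet X := hX.isClosed.measurableSet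
  obtain ⟨M, hM⟩ := hX.exists_bound_of_continuousOn hf
  have hfm : AEStronglyMeasurable f (α.restrict X) := hf.aestronglyMeasurable hXm
  have hcx : ∀ x, Continuous fun z => Real.exp (-(c x z) / ε) := by
    intro x
    exact Real.continuous_exp.comp
      (((hc.comp (Continuous.prodMk_right x)).neg).div_const ε)
  have hmeas : ∀ x, AEStronglyMeasurable (fun z => Real.exp (-(c x z) / ε) * f z)
      (α.restrict X) := fun x => ((hcx x).aestronglyMeasurable).mul hfm
  have hbound : ∀ x ∈ X, ∀ᵐ z ∂(α.restrict X),
      ‖Real.exp (-(c x z) / ε) * f z‖ ≤ M := by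
    intro x hx
    filter_upwards [ae_restrict_mem hXm] with z hz
    have h1 : Real.exp (-(c x z) / ε) ≤ 1 := by
      rw [← Real.exp_zero]
      apply Real.exp_le_exp.mpr
      apply div_nonpos_of_nonpos_of_nonneg _ hε.le
      linarith [hc0 x hx z hz]
    have h2 : ‖f z‖ ≤ M := hM z hz
    calc ‖Real.exp (-(c x z) / ε) * f z‖
        = Real.exp (-(c x z) / ε) * ‖f z‖ := by
          rw [norm_mul, Real.norm_of_nonneg (Real.exp_pos _).le]
      _ ≤ 1 * M := by
          apply mul_le_mul h1 h2 (norm_nonneg _) zero_le_one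
      _ = M := one_mul M
  have hint : ∀ x ∈ X, IntegrableOn (fun z => Real.exp (-(c x z) / ε) * f z) X α := by
    intro x hx
    exact Integrable.mono' (integrable_const M) (hmeas x) (hbound x hx)
  refine ⟨?_, ?_, ?_⟩
  · intro x₀ hx₀
    apply continuousWithinAt_of_dominated (bound := fun _ => M)
    · filter_upwards [self_mem_nhdsWithin] with x hx using hmeas x
    · filter_upwards [self_mem_nhdsWithin] with x hx using hbound x hx
    · exact integrable_const M
    · filter_upwards with z
      exact ((Real.continuous_exp.comp
        (((hc.comp (continuous_id.prodMk continuous_const)).neg).div_const ε)).mul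
        continuous_const).continuousWithinAt
  · intro x hx
    apply setIntegral_nonneg hXm
    intro z hz
    exact mul_nonneg (Real.exp_pos _).le (hfnn z hz)
  · intro x hx y hy
    rw [← integral_mul_const]
    apply setIntegral_mono_on (hint x hx) ((hint y hy).mul_const _) hXm
    intro z hz
    have h1 : Real.exp (-(c x z) / ε) ≤ 1 := by
      rw [← Real.exp_zero]
      apply Real.exp_le_exp.mpr
      apply div_nonpos_of_nonpos_of_nonneg _ hε.le
      linarith [hc0 x hx z hz]
    have h2 : (1 : ℝ) ≤ Real.exp (-(c y z) / ε) * Real.exp (D / ε) := by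
      rw [← Real.exp_add, ← Real.exp_zero]
      apply Real.exp_le_exp.mpr
      rw [← add_div]
      apply div_nonneg _ hε.le
      linarith [hcD y hy z hz]
    calc Real.exp (-(c x z) / ε) * f z
        ≤ (Real.exp (-(c y z) / ε) * Real.exp (D / ε)) * f z :=
          mul_le_mul_of_nonneg_right (h1.trans h2) (hfnn z hz)
      _ = (Real.exp (-(c y z) / ε) * f z) * Real.exp (D / ε) := by ring
end

section
/- Let X be compact, c continuous symmetric with values in [0,D], ε > 0, k = exp(−c/ε), α a probability measure on X, (L_α f)(x) = ∫ k(x,z) f(z) dα(z). Then for all nonnegative continuous f, f' with L_α f and L_α f' strictly positive, the Hilbert metric satisfies d_H(L_α f, L_α f') ≤ 2D/ε; that is, the projective diameter of L_α is at most 2D/ε. -/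
/-! The Gibbs kernel `k(x, z) = exp (-c(x, z) / ε)` oscillates by at most a factor `exp (D / ε)`
in `x` when `0 ≤ c ≤ D`, and integrating against a nonnegative `f` preserves this:
`L f x ≤ exp (D / ε) * L f y`. Each of the two ratios in the Hilbert metric is therefore at most
`exp (D / ε)`, so every cross ratio is at most `exp (2 D / ε)`. -/

open MeasureTheory

noncomputable def gibbsOperator {E : Type*} [MeasurableSpace E] (μ : Measure E) (X : Set E)
    (c : E → E → ℝ) (ε : ℝ) (g : E → ℝ) (x : E) : ℝ :=
  ∫ z in X, Real.exp (-(c x z) / ε) * g z ∂μ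

section HilbertDist

variable {E : Type*} {X : Set E} {g g' : E → ℝ}

theorem hilbertDist_le_of_forall_le_exp (hne : X.Nonempty)
    (hg : ∀ x ∈ X, 0 < g x) (hg' : ∀ x ∈ X, 0 < g' x) {M : ℝ}
    (hM : ∀ x ∈ X, ∀ y ∈ X, g x * g' y / (g y * g' x) ≤ Real.exp M) :
    hilbertDist X g g' ≤ M := by
  set S := {r : ℝ | ∃ x ∈ X, ∃ y ∈ X, r = g x * g' y / (g y * g' x)}
  have hS : ∀ r ∈ S, r ≤ Real.exp M := by
    rintro r ⟨x, hx, y, hy, rfl⟩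
    exact hM x hx y hy
  obtain ⟨x₀, hx₀⟩ := hne
  have hone : (1 : ℝ) ∈ S :=
    ⟨x₀, hx₀, x₀, hx₀, (div_self (mul_pos (hg x₀ hx₀) (hg' x₀ hx₀)).ne').symm⟩
  have hpos : 0 < sSup S := one_pos.trans_le (le_csSup ⟨_, hS⟩ hone)
  exact (Real.log_le_iff_le_exp hpos).mpr (csSup_le ⟨1, hone⟩ hS)

theorem hilbertDist_le_of_le_exp_mul (hne : X.Nonempty)
    (hg : ∀ x ∈ X, 0 < g x) (hg' : ∀ x ∈ X, 0 < g' x) {M : ℝ}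
    (hgM : ∀ x ∈ X, ∀ y ∈ X, g x ≤ Real.exp M * g y)
    (hg'M : ∀ x ∈ X, ∀ y ∈ X, g' x ≤ Real.exp M * g' y) :
    hilbertDist X g g' ≤ 2 * M := by
  refine hilbertDist_le_of_forall_le_exp hne hg hg' fun x hx y hy => ?_
  rw [div_le_iff₀ (mul_pos (hg y hy) (hg' x hx)), two_mul, Real.exp_add]
  calc g x * g' y ≤ (Real.exp M * g y) * (Real.exp M * g' x) :=
        mul_le_mul (hgM x hx y hy) (hg'M y hy x hx) (hg' y hy).le
          (mul_pos (Real.exp_pos M) (hg y hy)).le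
    _ = Real.exp M * Real.exp M * (g y * g' x) := by ring

end HilbertDist

theorem exp_neg_div_le_exp_div_mul {a b D ε : ℝ} (hε : 0 ≤ ε) (ha : 0 ≤ a) (hb : b ≤ D) :
    Real.exp (-a / ε) ≤ Real.exp (D / ε) * Real.exp (-b / ε) := by
  rw [← Real.exp_add, Real.exp_le_exp, ← add_div]
  exact div_le_div_of_nonneg_right (by linarith) hε

theorem setIntegral_mul_le_const_mul {E : Type*} [MeasurableSpace E] {μ : Measure E} {X : Set E}
    (hX : MeasurableSet X) {k₁ k₂ g : E → ℝ} {C : ℝ}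
    (h₁ : IntegrableOn (fun z => k₁ z * g z) X μ) (h₂ : IntegrableOn (fun z => k₂ z * g z) X μ)
    (hg : ∀ z ∈ X, 0 ≤ g z) (hk : ∀ z ∈ X, k₁ z ≤ C * k₂ z) :
    ∫ z in X, k₁ z * g z ∂μ ≤ C * ∫ z in X, k₂ z * g z ∂μ := by
  rw [← integral_const_mul]
  refine setIntegral_mono_on h₁ (h₂.const_mul C) hX fun z hz => ?_
  rw [← mul_assoc]
  exact mul_le_mul_of_nonneg_right (hk z hz) (hg z hz)

theorem gibbsOperator_le_exp_mul {E : Type*} [TopologicalSpace E] [T2Space E] [MeasurableSpace E]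
    [OpensMeasurableSpace E] {μ : Measure E} [IsFiniteMeasureOnCompacts μ] {X : Set E}
    (hX : IsCompact X) {c : E → E → ℝ} {D ε : ℝ} (hε : 0 < ε)
    (hc : ∀ x ∈ X, ContinuousOn (c x) X)
    (hc0 : ∀ x ∈ X, ∀ y ∈ X, 0 ≤ c x y) (hcD : ∀ x ∈ X, ∀ y ∈ X, c x y ≤ D)
    {g : E → ℝ} (hg : ContinuousOn g X) (hgnn : ∀ z ∈ X, 0 ≤ g z) {x y : E} (hx : x ∈ X)
    (hy : y ∈ X) :
    gibbsOperator μ X c ε g x ≤ Real.exp (D / ε) * gibbsOperator μ X c ε g y := by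
  have hint : ∀ w ∈ X, IntegrableOn (fun z => Real.exp (-(c w z) / ε) * g z) X μ := fun w hw =>
    ((((hc w hw).neg.div_const ε).rexp).mul hg).integrableOn_compact hX
  exact setIntegral_mul_le_const_mul hX.measurableSet (hint x hx) (hint y hy) hgnn
    fun z hz => exp_neg_div_le_exp_div_mul hε.le (hc0 x hx z hz) (hcD y hy z hz)

theorem projective_diameter_bound_general
    (d : ℕ) (X : Set (Fin d → ℝ)) (hX : IsCompact X) (hne : X.Nonempty)
    (D ε : ℝ) (hε : 0 < ε)
    (c : (Fin d → ℝ) → (Fin d → ℝ) → ℝ)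
    (hc : Continuous fun p : (Fin d → ℝ) × (Fin d → ℝ) => c p.1 p.2)
    (hc0 : ∀ x ∈ X, ∀ y ∈ X, 0 ≤ c x y)
    (hcD : ∀ x ∈ X, ∀ y ∈ X, c x y ≤ D)
    (α : Measure (Fin d → ℝ)) [IsProbabilityMeasure α]
    (f f' : (Fin d → ℝ) → ℝ)
    (hf : ContinuousOn f X) (hf' : ContinuousOn f' X)
    (hfnn : ∀ x ∈ X, 0 ≤ f x) (hf'nn : ∀ x ∈ X, 0 ≤ f' x)
    (hLf : ∀ x ∈ X, 0 < ∫ z in X, Real.exp (-(c x z) / ε) * f z ∂α)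
    (hLf' : ∀ x ∈ X, 0 < ∫ z in X, Real.exp (-(c x z) / ε) * f' z ∂α) :
    hilbertDist X (fun x => ∫ z in X, Real.exp (-(c x z) / ε) * f z ∂α)
        (fun x => ∫ z in X, Real.exp (-(c x z) / ε) * f' z ∂α) ≤
      2 * D / ε := by
  have hcx : ∀ x ∈ X, ContinuousOn (c x) X := fun x _ =>
    (hc.comp (Continuous.prodMk_right x)).continuousOn
  rw [mul_div_assoc]
  exact hilbertDist_le_of_le_exp_mul (g := gibbsOperator α X c ε f)
    (g' := gibbsOperator α X c ε f') hne hLf hLf'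
    (fun _ hx _ hy => gibbsOperator_le_exp_mul hX hε hcx hc0 hcD hf hfnn hx hy)
    (fun _ hx _ hy => gibbsOperator_le_exp_mul hX hε hcx hc0 hcD hf' hf'nn hx hy)

theorem projective_diameter_bound
    (d : ℕ) (X : Set (Fin d → ℝ)) (hX : IsCompact X) (hne : X.Nonempty)
    (D ε : ℝ) (hD : 0 ≤ D) (hε : 0 < ε)
    (c : (Fin d → ℝ) → (Fin d → ℝ) → ℝ)
    (hc : Continuous fun p : (Fin d → ℝ) × (Fin d → ℝ) => c p.1 p.2)
    (hcsym : ∀ x y, c x y = c y x)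
    (hc0 : ∀ x ∈ X, ∀ y ∈ X, 0 ≤ c x y)
    (hcD : ∀ x ∈ X, ∀ y ∈ X, c x y ≤ D)
    (α : Measure (Fin d → ℝ)) [IsProbabilityMeasure α] (hα : α X = 1)
    (f f' : (Fin d → ℝ) → ℝ)
    (hf : ContinuousOn f X) (hf' : ContinuousOn f' X)
    (hfnn : ∀ x ∈ X, 0 ≤ f x) (hf'nn : ∀ x ∈ X, 0 ≤ f' x)
    (hLf : ∀ x ∈ X, 0 < ∫ z in X, Real.exp (-(c x z) / ε) * f z ∂α)
    (hLf' : ∀ x ∈ X, 0 < ∫ z in X, Real.exp (-(c x z) / ε) * f' z ∂α) :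
    hilbertDist X (fun x => ∫ z in X, Real.exp (-(c x z) / ε) * f z ∂α)
        (fun x => ∫ z in X, Real.exp (-(c x z) / ε) * f' z ∂α) ≤
      2 * D / ε :=
  projective_diameter_bound_general d X hX hne D ε hε c hc hc0 hcD α f f' hf hf' hfnn hf'nn hLf hLf'
end

section
/- Let x₀ ∈ X and let (f, g) be a solution of the DAD fixed-point system f = A_β(g), g = A_α(f) with f(x₀) = 1. Then ‖f‖_∞ ≤ e^{D/ε} and ‖g‖_∞ ≤ e^{2D/ε}; equivalently the Sinkhorn potentials u = ε log f and v = ε log g satisfy ‖u‖_∞ ≤ D and ‖v‖_∞ ≤ 2D. -/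
open MeasureTheory

/-- The map `A_μ(f) = 1 / (L_μ f)` where `L_μ` is the kernel integral operator. -/
noncomputable def sinkA {d : ℕ} (X : Set (Fin d → ℝ))
    (c : (Fin d → ℝ) → (Fin d → ℝ) → ℝ) (ε : ℝ)
    (μ : Measure (Fin d → ℝ)) (f : (Fin d → ℝ) → ℝ) : (Fin d → ℝ) → ℝ :=
  fun x => (∫ z in X, Real.exp (-(c x z) / ε) * f z ∂μ)⁻¹

lemma dad_sandwich {d : ℕ} {X : Set (Fin d → ℝ)} (hX : IsCompact X)
    {D ε : ℝ} (hε : 0 < ε)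
    {c : (Fin d → ℝ) → (Fin d → ℝ) → ℝ}
    (hc : Continuous fun p : (Fin d → ℝ) × (Fin d → ℝ) => c p.1 p.2)
    (hc0 : ∀ x ∈ X, ∀ y ∈ X, 0 ≤ c x y)
    (hcD : ∀ x ∈ X, ∀ y ∈ X, c x y ≤ D)
    (μ : Measure (Fin d → ℝ)) [IsFiniteMeasure μ]
    {h : (Fin d → ℝ) → ℝ} (hh : ContinuousOn h X) (hhpos : ∀ z ∈ X, 0 ≤ h z)
    {x : Fin d → ℝ} (hx : x ∈ X) :
    Real.exp (-(D / ε)) * ∫ z in X, h z ∂μ ≤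
      (∫ z in X, Real.exp (-(c x z) / ε) * h z ∂μ) ∧
    (∫ z in X, Real.exp (-(c x z) / ε) * h z ∂μ) ≤ ∫ z in X, h z ∂μ := by
  have hcx : Continuous fun z => c x z := hc.comp (Continuous.prodMk_right x)
  have hker : ContinuousOn (fun z => Real.exp (-(c x z) / ε) * h z) X :=
    (((hcx.neg.div_const ε).rexp).continuousOn).mul hh
  have hint1 : IntegrableOn (fun z => Real.exp (-(c x z) / ε) * h z) X μ :=
    hker.integrableOn_compact hX
  have hint2 : IntegrableOn h X μ := hh.integrableOn_compact hX
  constructor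
  · have : ∫ z in X, Real.exp (-(D / ε)) * h z ∂μ ≤
        ∫ z in X, Real.exp (-(c x z) / ε) * h z ∂μ := by
      refine setIntegral_mono_on (hint2.const_mul _) hint1 hX.measurableSet ?_
      intro z hz
      refine mul_le_mul_of_nonneg_right ?_ (hhpos z hz)
      refine Real.exp_le_exp.mpr ?_
      rw [neg_div]
      exact neg_le_neg ((div_le_div_iff_of_pos_right hε).mpr (hcD x hx z hz))
    simpa [integral_const_mul] using this
  · refine setIntegral_mono_on hint1 hint2 hX.measurableSet ?_
    intro z hz
    have h1 : Real.exp (-(c x z) / ε) ≤ 1 := by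
      refine Real.exp_le_one_iff.mpr ?_
      rw [neg_div]
      exact neg_nonpos.mpr (div_nonneg (hc0 x hx z hz) hε.le)
    calc Real.exp (-(c x z) / ε) * h z ≤ 1 * h z :=
          mul_le_mul_of_nonneg_right h1 (hhpos z hz)
      _ = h z := one_mul _

lemma dad_int_pos {d : ℕ} {X : Set (Fin d → ℝ)} (hX : IsCompact X) (hne : X.Nonempty)
    (μ : Measure (Fin d → ℝ)) [IsProbabilityMeasure μ] (hμ : μ X = 1)
    {h : (Fin d → ℝ) → ℝ} (hh : ContinuousOn h X) (hhpos : ∀ z ∈ X, 0 < h z) :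
    0 < ∫ z in X, h z ∂μ := by
  obtain ⟨z₀, hz₀, hmin⟩ := hX.exists_isMinOn hne hh
  have hint2 : IntegrableOn h X μ := hh.integrableOn_compact hX
  have : ∫ z in X, (fun _ => h z₀) z ∂μ ≤ ∫ z in X, h z ∂μ := by
    refine setIntegral_mono_on ((integrableOn_const_iff).mpr (Or.inr ?_)) hint2
      hX.measurableSet (fun z hz => hmin hz)
    rw [hμ]; exact ENNReal.one_lt_top
  have hconst : ∫ z in X, (fun _ => h z₀) z ∂μ = h z₀ := by
    rw [setIntegral_const, measureReal_def, hμ]; simp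
  rw [hconst] at this
  exact lt_of_lt_of_le (hhpos z₀ hz₀) this

theorem dad_solution_bounds
    (d : ℕ) (X : Set (Fin d → ℝ)) (hX : IsCompact X) (hne : X.Nonempty)
    (x₀ : Fin d → ℝ) (hx₀ : x₀ ∈ X)
    (D ε : ℝ) (hD : 0 ≤ D) (hε : 0 < ε)
    (c : (Fin d → ℝ) → (Fin d → ℝ) → ℝ)
    (hc : Continuous fun p : (Fin d → ℝ) × (Fin d → ℝ) => c p.1 p.2)
    (hcsym : ∀ x y, c x y = c y x)
    (hc0 : ∀ x ∈ X, ∀ y ∈ X, 0 ≤ c x y)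
    (hcD : ∀ x ∈ X, ∀ y ∈ X, c x y ≤ D)
    (α β : Measure (Fin d → ℝ))
    [IsProbabilityMeasure α] [IsProbabilityMeasure β]
    (hα : α X = 1) (hβ : β X = 1)
    (f g : (Fin d → ℝ) → ℝ)
    (hf : ContinuousOn f X) (hg : ContinuousOn g X)
    (hfpos : ∀ x ∈ X, 0 < f x) (hgpos : ∀ x ∈ X, 0 < g x)
    (hfg : ∀ x ∈ X, f x = sinkA X c ε β g x)
    (hgf : ∀ x ∈ X, g x = sinkA X c ε α f x)
    (hf0 : f x₀ = 1) :
    (∀ x ∈ X, f x ≤ Real.exp (D / ε)) ∧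
    (∀ x ∈ X, g x ≤ Real.exp (2 * D / ε)) ∧
    (∀ x ∈ X, |ε * Real.log (f x)| ≤ D) ∧
    (∀ x ∈ X, |ε * Real.log (g x)| ≤ 2 * D) := by
  set Ig := ∫ z in X, g z ∂β with hIg
  set If := ∫ z in X, f z ∂α with hIf
  have hIgpos : 0 < Ig := dad_int_pos hX hne β hβ hg hgpos
  have hIfpos : 0 < If := dad_int_pos hX hne α hα hf hfpos
  -- bounds on f via fixed point
  have hfbound : ∀ x ∈ X, Ig⁻¹ ≤ f x ∧ f x ≤ Real.exp (D / ε) * Ig⁻¹ := by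
    intro x hx
    obtain ⟨hlo, hhi⟩ := dad_sandwich hX hε hc hc0 hcD β hg
      (fun z hz => (hgpos z hz).le) hx
    have hL : 0 < ∫ z in X, Real.exp (-(c x z) / ε) * g z ∂β :=
      lt_of_lt_of_le (by positivity) hlo
    rw [hfg x hx, sinkA]
    constructor
    · exact inv_anti₀ hL hhi
    · have hh2 := inv_anti₀ (by positivity : 0 < Real.exp (-(D / ε)) * Ig) hlo
      calc (∫ z in X, Real.exp (-(c x z) / ε) * g z ∂β)⁻¹
          ≤ (Real.exp (-(D / ε)) * Ig)⁻¹ := hh2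
        _ = Real.exp (D / ε) * Ig⁻¹ := by
            rw [mul_inv, Real.exp_neg, inv_inv]
  -- pin down Ig using f x₀ = 1
  obtain ⟨h1, h2⟩ := hfbound x₀ hx₀
  rw [hf0] at h1 h2
  have hIg1 : 1 ≤ Ig := by
    nlinarith [mul_inv_cancel₀ hIgpos.ne']
  have hIg2 : Ig ≤ Real.exp (D / ε) := by
    nlinarith [mul_le_mul_of_nonneg_right h2 hIgpos.le, mul_inv_cancel₀ hIgpos.ne']
  -- f bounds
  have hfub : ∀ x ∈ X, f x ≤ Real.exp (D / ε) := by
    intro x hx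
    have := (hfbound x hx).2
    have hinv : Ig⁻¹ ≤ 1 := by nlinarith [mul_inv_cancel₀ hIgpos.ne']
    calc f x ≤ Real.exp (D / ε) * Ig⁻¹ := this
      _ ≤ Real.exp (D / ε) * 1 := by
          exact mul_le_mul_of_nonneg_left hinv (Real.exp_pos _).le
      _ = Real.exp (D / ε) := mul_one _
  have hflb : ∀ x ∈ X, Real.exp (-(D / ε)) ≤ f x := by
    intro x hx
    have hinv : Real.exp (-(D / ε)) ≤ Ig⁻¹ := by
      rw [Real.exp_neg]
      exact inv_anti₀ (by positivity) hIg2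
    linarith [(hfbound x hx).1]
  -- bounds on If
  have hIfub : If ≤ Real.exp (D / ε) := by
    have : If ≤ ∫ _ in X, Real.exp (D / ε) ∂α := by
      refine setIntegral_mono_on (hf.integrableOn_compact hX)
        ((integrableOn_const_iff).mpr (Or.inr (by rw [hα]; exact ENNReal.one_lt_top)))
        hX.measurableSet hfub
    rwa [setIntegral_const, measureReal_def, hα, ENNReal.toReal_one, one_smul] at this
  have hIflb : Real.exp (-(D / ε)) ≤ If := by
    have : (∫ _ in X, Real.exp (-(D / ε)) ∂α) ≤ If := by
      refine setIntegral_mono_on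
        ((integrableOn_const_iff).mpr (Or.inr (by rw [hα]; exact ENNReal.one_lt_top)))
        (hf.integrableOn_compact hX) hX.measurableSet hflb
    rwa [setIntegral_const, measureReal_def, hα, ENNReal.toReal_one, one_smul] at this
  -- g bounds
  have hgbound : ∀ x ∈ X, If⁻¹ ≤ g x ∧ g x ≤ Real.exp (D / ε) * If⁻¹ := by
    intro x hx
    obtain ⟨hlo, hhi⟩ := dad_sandwich hX hε hc hc0 hcD α hf
      (fun z hz => (hfpos z hz).le) hx
    have hL : 0 < ∫ z in X, Real.exp (-(c x z) / ε) * f z ∂α :=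
      lt_of_lt_of_le (by positivity) hlo
    rw [hgf x hx, sinkA]
    constructor
    · exact inv_anti₀ hL hhi
    · have hh2 := inv_anti₀ (by positivity : 0 < Real.exp (-(D / ε)) * If) hlo
      calc (∫ z in X, Real.exp (-(c x z) / ε) * f z ∂α)⁻¹
          ≤ (Real.exp (-(D / ε)) * If)⁻¹ := hh2
        _ = Real.exp (D / ε) * If⁻¹ := by rw [mul_inv, Real.exp_neg, inv_inv]
  have hgub : ∀ x ∈ X, g x ≤ Real.exp (2 * D / ε) := by
    intro x hx
    have h2' : If⁻¹ ≤ Real.exp (D / ε) := by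
      have := inv_anti₀ (Real.exp_pos (-(D / ε))) hIflb
      rwa [← Real.exp_neg, neg_neg] at this
    calc g x ≤ Real.exp (D / ε) * If⁻¹ := (hgbound x hx).2
      _ ≤ Real.exp (D / ε) * Real.exp (D / ε) :=
          mul_le_mul_of_nonneg_left h2' (Real.exp_pos _).le
      _ = Real.exp (2 * D / ε) := by
          rw [← Real.exp_add]; ring_nf
  have hglb : ∀ x ∈ X, Real.exp (-(2 * D / ε)) ≤ g x := by
    intro x hx
    have : Real.exp (-(2 * D / ε)) ≤ If⁻¹ := by
      rw [Real.exp_neg]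
      refine inv_anti₀ hIfpos ?_
      calc If ≤ Real.exp (D / ε) := hIfub
        _ ≤ Real.exp (2 * D / ε) := Real.exp_le_exp.mpr (by
            rw [div_le_div_iff₀ hε hε]; nlinarith)
    linarith [(hgbound x hx).1]
  refine ⟨hfub, hgub, ?_, ?_⟩
  · intro x hx
    have hfx := hfpos x hx
    rw [abs_le]
    constructor
    · have : -(D / ε) ≤ Real.log (f x) := by
        rw [← Real.log_exp (-(D / ε))]
        exact Real.log_le_log (Real.exp_pos _) (hflb x hx)
      calc -D = ε * (-(D / ε)) := by field_simp; all_goals ring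
        _ ≤ ε * Real.log (f x) := mul_le_mul_of_nonneg_left this hε.le
    · have : Real.log (f x) ≤ D / ε := by
        rw [← Real.log_exp (D / ε)]
        exact Real.log_le_log hfx (hfub x hx)
      calc ε * Real.log (f x) ≤ ε * (D / ε) := mul_le_mul_of_nonneg_left this hε.le
        _ = D := by field_simp; all_goals ring
  · intro x hx
    have hgx := hgpos x hx
    rw [abs_le]
    constructor
    · have : -(2 * D / ε) ≤ Real.log (g x) := by
        rw [← Real.log_exp (-(2 * D / ε))]
        exact Real.log_le_log (Real.exp_pos _) (hglb x hx)
      calc -(2 * D) = ε * (-(2 * D / ε)) := by field_simp; all_goals ring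
        _ ≤ ε * Real.log (g x) := mul_le_mul_of_nonneg_left this hε.le
    · have : Real.log (g x) ≤ 2 * D / ε := by
        rw [← Real.log_exp (2 * D / ε)]
        exact Real.log_le_log hgx (hgub x hx)
      calc ε * Real.log (g x) ≤ ε * (2 * D / ε) := mul_le_mul_of_nonneg_left this hε.le
        _ = 2 * D := by field_simp; all_goals ring
end

section
/- Let K be the cone { h ≥ 0 continuous on compact X : h(x) ≤ h(y) e^{D/ε} } and let f, f' ∈ K satisfy f(x₀) = f'(x₀) = 1. Set g = A_α(f) and g' = A_α(f'). Then ‖log g − log g'‖_∞ ≤ e^{3D/ε} ‖log f − log f'‖_∞. -/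
open MeasureTheory

theorem log_A_alpha_lipschitz
    (d : ℕ) (X : Set (Fin d → ℝ)) (hX : IsCompact X) (hne : X.Nonempty)
    (x₀ : Fin d → ℝ) (hx₀ : x₀ ∈ X)
    (D ε : ℝ) (hD : 0 ≤ D) (hε : 0 < ε)
    (c : (Fin d → ℝ) → (Fin d → ℝ) → ℝ)
    (hc : Continuous fun p : (Fin d → ℝ) × (Fin d → ℝ) => c p.1 p.2)
    (hcsym : ∀ x y, c x y = c y x)
    (hc0 : ∀ x ∈ X, ∀ y ∈ X, 0 ≤ c x y)
    (hcD : ∀ x ∈ X, ∀ y ∈ X, c x y ≤ D)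
    (α : Measure (Fin d → ℝ)) [IsProbabilityMeasure α] (hα : α X = 1)
    (f f' : (Fin d → ℝ) → ℝ)
    (hf : ContinuousOn f X) (hf' : ContinuousOn f' X)
    (hfnn : ∀ x ∈ X, 0 ≤ f x) (hf'nn : ∀ x ∈ X, 0 ≤ f' x)
    (hfK : ∀ x ∈ X, ∀ y ∈ X, f x ≤ f y * Real.exp (D / ε))
    (hf'K : ∀ x ∈ X, ∀ y ∈ X, f' x ≤ f' y * Real.exp (D / ε))
    (hf0 : f x₀ = 1) (hf'0 : f' x₀ = 1) :
    supNormOn X (fun x =>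
        Real.log (sinkA X c ε α f x) - Real.log (sinkA X c ε α f' x)) ≤
      Real.exp (3 * D / ε) *
        supNormOn X (fun x => Real.log (f x) - Real.log (f' x)) := by
  have hXm : MeasurableSet X := hX.isClosed.measurableSet
  set r : ℝ := Real.exp (D / ε) with hrdef
  have hrpos : 0 < r := Real.exp_pos _
  have hr1 : 1 ≤ r := Real.one_le_exp (by positivity)
  -- lower and upper bounds for f and f'
  have lb : ∀ (g : (Fin d → ℝ) → ℝ), (∀ x ∈ X, 0 ≤ g x) →
      (∀ x ∈ X, ∀ y ∈ X, g x ≤ g y * r) → g x₀ = 1 →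
      ∀ x ∈ X, r⁻¹ ≤ g x ∧ g x ≤ r := by
    intro g hgnn hgK hg0 x hx
    constructor
    · have h1 : (1:ℝ) ≤ g x * r := by
        have := hgK x₀ hx₀ x hx; rwa [hg0] at this
      rw [inv_le_iff_one_le_mul₀ hrpos]
      linarith [h1]
    · have := hgK x hx x₀ hx₀; rwa [hg0, one_mul] at this
  have hfb := lb f hfnn hfK hf0
  have hf'b := lb f' hf'nn hf'K hf'0
  have hfpos : ∀ x ∈ X, 0 < f x := fun x hx =>
    lt_of_lt_of_le (inv_pos.mpr hrpos) (hfb x hx).1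
  have hf'pos : ∀ x ∈ X, 0 < f' x := fun x hx =>
    lt_of_lt_of_le (inv_pos.mpr hrpos) (hf'b x hx).1
  -- bound on |log f x - log f' x|
  have hlogb : ∀ (g : (Fin d → ℝ) → ℝ), (∀ x ∈ X, r⁻¹ ≤ g x ∧ g x ≤ r) →
      ∀ x ∈ X, |Real.log (g x)| ≤ D / ε := by
    intro g hg x hx
    rw [abs_le]
    constructor
    · have := Real.log_le_log (by positivity) (hg x hx).1
      rwa [Real.log_inv, hrdef, Real.log_exp] at this
    · have := Real.log_le_log (lt_of_lt_of_le (by positivity) (hg x hx).1) (hg x hx).2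
      rwa [hrdef, Real.log_exp] at this
  set S := {t : ℝ | ∃ x ∈ X, t = |Real.log (f x) - Real.log (f' x)|} with hS
  have hSbdd : BddAbove S := by
    refine ⟨2 * (D / ε), ?_⟩
    rintro t ⟨x, hx, rfl⟩
    have h1 := hlogb f hfb x hx
    have h2 := hlogb f' hf'b x hx
    calc |Real.log (f x) - Real.log (f' x)| ≤ |Real.log (f x)| + |Real.log (f' x)| :=
          abs_sub _ _
      _ ≤ 2 * (D / ε) := by linarith
  have hSne : S.Nonempty := ⟨_, x₀, hx₀, rfl⟩
  set M : ℝ := sSup S with hM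
  have hM0 : 0 ≤ M := le_trans (abs_nonneg _) (le_csSup hSbdd ⟨x₀, hx₀, rfl⟩)
  have hMmem : ∀ x ∈ X, |Real.log (f x) - Real.log (f' x)| ≤ M :=
    fun x hx => le_csSup hSbdd ⟨x, hx, rfl⟩
  -- the integral operator
  set L : ((Fin d → ℝ) → ℝ) → (Fin d → ℝ) → ℝ :=
    fun g x => ∫ z in X, Real.exp (-(c x z) / ε) * g z ∂α with hL
  have hint : ∀ (g : (Fin d → ℝ) → ℝ), ContinuousOn g X → ∀ x,
      IntegrableOn (fun z => Real.exp (-(c x z) / ε) * g z) X α := by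
    intro g hg x
    apply ContinuousOn.integrableOn_compact hX
    apply ContinuousOn.mul _ hg
    apply Continuous.comp_continuousOn Real.continuous_exp
    apply ContinuousOn.div_const
    exact (hc.comp (continuous_const.prodMk continuous_id)).neg.continuousOn
  -- lower bound on L g
  have hLlb : ∀ (g : (Fin d → ℝ) → ℝ), ContinuousOn g X →
      (∀ x ∈ X, r⁻¹ ≤ g x ∧ g x ≤ r) → ∀ x ∈ X, r⁻¹ * r⁻¹ ≤ L g x := by
    intro g hg hgb x hx
    have hconst : ∫ _z in X, (r⁻¹ * r⁻¹) ∂α = r⁻¹ * r⁻¹ := by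
      rw [MeasureTheory.setIntegral_const, measureReal_def, hα, ENNReal.toReal_one, one_smul]
    rw [← hconst]
    apply MeasureTheory.setIntegral_mono_on
      (integrableOn_const (by rw [hα]; exact ENNReal.one_ne_top))
      (hint g hg x) hXm
    intro z hz
    have hk : r⁻¹ ≤ Real.exp (-(c x z) / ε) := by
      rw [hrdef, ← Real.exp_neg]
      apply Real.exp_le_exp.mpr
      rw [neg_div, neg_le_neg_iff]
      exact div_le_div_of_nonneg_right (hcD x hx z hz) hε.le
    exact mul_le_mul hk (hgb z hz).1 (by positivity) (Real.exp_nonneg _)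
  have hLpos : ∀ (g : (Fin d → ℝ) → ℝ), ContinuousOn g X →
      (∀ x ∈ X, r⁻¹ ≤ g x ∧ g x ≤ r) → ∀ x ∈ X, 0 < L g x :=
    fun g hg hgb x hx => lt_of_lt_of_le (by positivity) (hLlb g hg hgb x hx)
  -- comparison: L f ≤ e^M L f' and symmetrically
  have hcomp : ∀ (g g' : (Fin d → ℝ) → ℝ), ContinuousOn g X → ContinuousOn g' X →
      (∀ x ∈ X, 0 < g x) → (∀ x ∈ X, 0 < g' x) →
      (∀ x ∈ X, Real.log (g x) - Real.log (g' x) ≤ M) →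
      ∀ x ∈ X, L g x ≤ Real.exp M * L g' x := by
    intro g g' hg hg' hgp hg'p hlog x hx
    have : L g x ≤ ∫ z in X, Real.exp M * (Real.exp (-(c x z) / ε) * g' z) ∂α := by
      apply MeasureTheory.setIntegral_mono_on (hint g hg x)
        (((hint g' hg' x).const_mul (Real.exp M))) hXm
      intro z hz
      have hgz : g z ≤ Real.exp M * g' z := by
        have h1 : Real.log (g z) ≤ M + Real.log (g' z) := by linarith [hlog z hz]
        calc g z = Real.exp (Real.log (g z)) := (Real.exp_log (hgp z hz)).symm
          _ ≤ Real.exp (M + Real.log (g' z)) := Real.exp_le_exp.mpr h1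
          _ = Real.exp M * g' z := by rw [Real.exp_add, Real.exp_log (hg'p z hz)]
      calc Real.exp (-(c x z) / ε) * g z ≤ Real.exp (-(c x z) / ε) * (Real.exp M * g' z) :=
            mul_le_mul_of_nonneg_left hgz (Real.exp_nonneg _)
        _ = Real.exp M * (Real.exp (-(c x z) / ε) * g' z) := by ring
    rwa [MeasureTheory.integral_const_mul] at this
  -- the log-difference bound
  have hkey : ∀ x ∈ X, |Real.log (L f' x) - Real.log (L f x)| ≤ M := by
    intro x hx
    have h1 := hcomp f f' hf hf' hfpos hf'pos
      (fun z hz => (abs_le.mp (hMmem z hz)).2) x hx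
    have h2 := hcomp f' f hf' hf hf'pos hfpos
      (fun z hz => by linarith [(abs_le.mp (hMmem z hz)).1]) x hx
    have hp := hLpos f hf hfb x hx
    have hp' := hLpos f' hf' hf'b x hx
    rw [abs_le]
    constructor
    · have := Real.log_le_log hp h1
      rw [Real.log_mul (Real.exp_ne_zero _) (ne_of_gt hp'), Real.log_exp] at this
      linarith
    · have := Real.log_le_log hp' h2
      rw [Real.log_mul (Real.exp_ne_zero _) (ne_of_gt hp), Real.log_exp] at this
      linarith
  -- finish
  have hE1 : 1 ≤ Real.exp (3 * D / ε) := Real.one_le_exp (by positivity)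
  have hMle : M ≤ Real.exp (3 * D / ε) * supNormOn X (fun x => Real.log (f x) - Real.log (f' x)) := by
    have : supNormOn X (fun x => Real.log (f x) - Real.log (f' x)) = M := rfl
    rw [this]
    exact le_mul_of_one_le_left hM0 hE1
  unfold supNormOn
  apply Real.sSup_le
  · rintro t ⟨x, hx, rfl⟩
    have heq : |Real.log (sinkA X c ε α f x) - Real.log (sinkA X c ε α f' x)|
        = |Real.log (L f' x) - Real.log (L f x)| := by
      show |Real.log (L f x)⁻¹ - Real.log (L f' x)⁻¹| = _
      rw [Real.log_inv, Real.log_inv,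
        show -Real.log (L f x) - -Real.log (L f' x)
          = Real.log (L f' x) - Real.log (L f x) from by ring]
    calc |Real.log (sinkA X c ε α f x) - Real.log (sinkA X c ε α f' x)|
        = |Real.log (L f' x) - Real.log (L f x)| := heq
      _ ≤ M := hkey x hx
      _ ≤ _ := hMle
  · exact le_trans hM0 hMle
end

section
/- Let α, β, α', β' be Borel probability measures on a compact set X, and let (u, v), (u', v') be the Sinkhorn potentials of (α,β) and (α',β') normalized so that u(x₀) = u'(x₀) = 0. Then ‖u − u'‖_∞ ≤ 2ε e^{3D/ε} (‖α − α'‖_TV + ‖β − β'‖_TV). -/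
open MeasureTheory

/-- Total variation norm of the difference of two finite measures. -/
noncomputable def tvDist {E : Type*} [MeasurableSpace E]
    (μ ν : Measure E) [IsFiniteMeasure μ] [IsFiniteMeasure ν] : ℝ :=
  ((μ.toSignedMeasure - ν.toSignedMeasure).totalVariation Set.univ).toReal

lemma tvDist_comm {E : Type*} [MeasurableSpace E]
    (μ ν : Measure E) [IsFiniteMeasure μ] [IsFiniteMeasure ν] :
    tvDist μ ν = tvDist ν μ := by
  unfold tvDist
  rw [← neg_sub μ.toSignedMeasure ν.toSignedMeasure, SignedMeasure.totalVariation_neg]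

lemma tvDist_nonneg {E : Type*} [MeasurableSpace E]
    (μ ν : Measure E) [IsFiniteMeasure μ] [IsFiniteMeasure ν] :
    0 ≤ tvDist μ ν := ENNReal.toReal_nonneg

lemma integral_tv_le {d : ℕ} {X : Set (Fin d → ℝ)} (hXm : MeasurableSet X)
    (μ μ' : Measure (Fin d → ℝ)) [IsFiniteMeasure μ] [IsFiniteMeasure μ']
    {f : (Fin d → ℝ) → ℝ} (hf : ContinuousOn f X) {M : ℝ}
    (h0 : ∀ y ∈ X, 0 ≤ f y) (hM : ∀ y ∈ X, f y ≤ M) (hM0 : 0 ≤ M) :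
    ∫ y in X, f y ∂μ' ≤ (∫ y in X, f y ∂μ) + M * tvDist μ μ' := by
  classical
  set sm : SignedMeasure (Fin d → ℝ) := μ.toSignedMeasure - μ'.toSignedMeasure with hsm
  set νp : Measure (Fin d → ℝ) := sm.toJordanDecomposition.posPart with hνp
  set νn : Measure (Fin d → ℝ) := sm.toJordanDecomposition.negPart with hνn
  have hJ : νp.toSignedMeasure - νn.toSignedMeasure = sm :=
    sm.toSignedMeasure_toJordanDecomposition
  have key : μ + νn = μ' + νp := by
    ext A hA
    have h1 : (νp.toSignedMeasure A : ℝ) - νn.toSignedMeasure A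
        = μ.toSignedMeasure A - μ'.toSignedMeasure A := by
      rw [← VectorMeasure.sub_apply, hJ, hsm, VectorMeasure.sub_apply]
    rw [Measure.toSignedMeasure_apply_measurable hA,
        Measure.toSignedMeasure_apply_measurable hA,
        Measure.toSignedMeasure_apply_measurable hA,
        Measure.toSignedMeasure_apply_measurable hA] at h1
    have hfin : ∀ (ρ : Measure (Fin d → ℝ)) [IsFiniteMeasure ρ], ρ A ≠ ⊤ :=
      fun ρ _ => measure_ne_top ρ A
    rw [Measure.add_apply, Measure.add_apply]
    rw [← ENNReal.toReal_eq_toReal_iff' (by simp [ENNReal.add_ne_top, hfin μ, hfin νn])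
      (by simp [ENNReal.add_ne_top, hfin μ', hfin νp]),
      ENNReal.toReal_add (hfin μ) (hfin νn), ENNReal.toReal_add (hfin μ') (hfin νp)]
    simp only [measureReal_def] at h1
    linarith
  have hi : ∀ (ρ : Measure (Fin d → ℝ)) [IsFiniteMeasure ρ], IntegrableOn f X ρ := by
    intro ρ _
    refine Integrable.mono' (integrable_const M) (hf.aestronglyMeasurable hXm) ?_
    refine (ae_restrict_iff' hXm).2 (Filter.Eventually.of_forall fun y hy => ?_)
    rw [Real.norm_eq_abs, abs_of_nonneg (h0 y hy)]
    exact hM y hy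
  have hadd : (∫ y in X, f y ∂μ) + ∫ y in X, f y ∂νn
      = (∫ y in X, f y ∂μ') + ∫ y in X, f y ∂νp := by
    rw [← integral_add_measure (hi μ) (hi νn), ← integral_add_measure (hi μ') (hi νp),
      ← Measure.restrict_add, ← Measure.restrict_add, key]
  have hnp : 0 ≤ ∫ y in X, f y ∂νp := setIntegral_nonneg hXm h0
  have htv : tvDist μ μ' = ((νp + νn) Set.univ).toReal := by
    unfold tvDist
    rfl
  have hnn : ∫ y in X, f y ∂νn ≤ M * tvDist μ μ' := by
    have h1 : ∫ y in X, f y ∂νn ≤ ∫ _y in X, M ∂νn :=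
      setIntegral_mono_on (hi νn) (integrableOn_const (measure_ne_top νn X)) hXm hM
    have h2 : ∫ _y in X, M ∂νn = (νn X).toReal * M := by
      rw [setIntegral_const, smul_eq_mul]; rfl
    have h3 : (νn X).toReal ≤ tvDist μ μ' := by
      rw [htv]
      refine ENNReal.toReal_mono (by simp [ENNReal.add_ne_top, measure_ne_top]) ?_
      calc νn X ≤ νn Set.univ := measure_mono (Set.subset_univ X)
        _ ≤ (νp + νn) Set.univ := by simp [Measure.add_apply]
    calc ∫ y in X, f y ∂νn ≤ (νn X).toReal * M := by rw [← h2]; exact h1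
      _ ≤ tvDist μ μ' * M := mul_le_mul_of_nonneg_right h3 hM0
      _ = M * tvDist μ μ' := mul_comm _ _
  linarith

lemma setint_ge {d : ℕ} {X : Set (Fin d → ℝ)} (hXm : MeasurableSet X)
    (μ : Measure (Fin d → ℝ)) [IsFiniteMeasure μ] (hμ1 : μ X = 1)
    {f : (Fin d → ℝ) → ℝ} {a : ℝ} (hfi : IntegrableOn f X μ)
    (h : ∀ y ∈ X, a ≤ f y) : a ≤ ∫ y in X, f y ∂μ := by
  have h1 : ∫ _y in X, a ∂μ ≤ ∫ y in X, f y ∂μ :=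
    setIntegral_mono_on (integrableOn_const (measure_ne_top μ X)) hfi hXm h
  rwa [setIntegral_const, measureReal_def, hμ1, ENNReal.toReal_one, one_smul] at h1

lemma setint_pos {d : ℕ} {X : Set (Fin d → ℝ)} (hX : IsCompact X) (hXm : MeasurableSet X)
    {x₀ : Fin d → ℝ} (hx₀ : x₀ ∈ X)
    (μ : Measure (Fin d → ℝ)) [IsFiniteMeasure μ] (hμ1 : μ X = 1)
    {f : (Fin d → ℝ) → ℝ} (hf : ContinuousOn f X)
    (hpos : ∀ y ∈ X, 0 < f y) : 0 < ∫ y in X, f y ∂μ := by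
  have hne : (f '' X).Nonempty := ⟨f x₀, Set.mem_image_of_mem f hx₀⟩
  have hcpt : IsCompact (f '' X) := hX.image_of_continuousOn hf
  have hmem : sInf (f '' X) ∈ f '' X := hcpt.sInf_mem hne
  obtain ⟨y₀, hy₀, hy₀e⟩ := hmem
  have h1 : 0 < sInf (f '' X) := hy₀e ▸ hpos y₀ hy₀
  have h2 : sInf (f '' X) ≤ ∫ y in X, f y ∂μ := by
    refine setint_ge hXm μ hμ1 (hf.integrableOn_compact hX) fun y hy => ?_
    exact csInf_le (hX.bddBelow_image hf) (Set.mem_image_of_mem f hy)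
  linarith

lemma pert {d : ℕ} {X : Set (Fin d → ℝ)} (hX : IsCompact X) (hXm : MeasurableSet X)
    {x₀ : Fin d → ℝ} (hx₀ : x₀ ∈ X)
    (μ μ' : Measure (Fin d → ℝ)) [IsFiniteMeasure μ] [IsFiniteMeasure μ']
    (hμ1 : μ X = 1)
    {f : (Fin d → ℝ) → ℝ} (hf : ContinuousOn f X) {K : ℝ} (hK : 1 ≤ K)
    (hpos : ∀ y ∈ X, 0 < f y)
    (hratio : ∀ y ∈ X, ∀ y' ∈ X, f y ≤ K * f y') :
    ∫ y in X, f y ∂μ' ≤ (1 + K * tvDist μ μ') * ∫ y in X, f y ∂μ := by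
  have hK0 : 0 < K := lt_of_lt_of_le one_pos hK
  have hne : (f '' X).Nonempty := ⟨f x₀, Set.mem_image_of_mem f hx₀⟩
  set c₀ := sInf (f '' X) with hc₀
  set M := sSup (f '' X) with hMdef
  have hfM : ∀ y ∈ X, f y ≤ M := fun y hy =>
    le_csSup (hX.bddAbove_image hf) (Set.mem_image_of_mem f hy)
  have hc₀f : ∀ y ∈ X, c₀ ≤ f y := fun y hy =>
    csInf_le (hX.bddBelow_image hf) (Set.mem_image_of_mem f hy)
  have hM0 : 0 ≤ M := le_trans (le_of_lt (hpos x₀ hx₀)) (hfM x₀ hx₀)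
  have hMK : M ≤ K * c₀ := by
    refine csSup_le hne ?_
    rintro _ ⟨y, hy, rfl⟩
    have h1 : f y / K ≤ c₀ := by
      refine le_csInf hne ?_
      rintro _ ⟨y', hy', rfl⟩
      rw [div_le_iff₀ hK0]
      calc f y ≤ K * f y' := hratio y hy y' hy'
        _ = f y' * K := mul_comm _ _
    calc f y = (f y / K) * K := by field_simp
      _ ≤ c₀ * K := mul_le_mul_of_nonneg_right h1 (le_of_lt hK0)
      _ = K * c₀ := mul_comm _ _
  have hc₀int : c₀ ≤ ∫ y in X, f y ∂μ := setint_ge hXm μ hμ1 (hf.integrableOn_compact hX) hc₀f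
  have htv0 : 0 ≤ tvDist μ μ' := tvDist_nonneg μ μ'
  have hB := integral_tv_le hXm μ μ' hf (fun y hy => le_of_lt (hpos y hy)) hfM hM0
  have h2 : M * tvDist μ μ' ≤ K * tvDist μ μ' * ∫ y in X, f y ∂μ := by
    calc M * tvDist μ μ' ≤ (K * c₀) * tvDist μ μ' := mul_le_mul_of_nonneg_right hMK htv0
      _ = (K * tvDist μ μ') * c₀ := by ring
      _ ≤ (K * tvDist μ μ') * ∫ y in X, f y ∂μ := by
          refine mul_le_mul_of_nonneg_left hc₀int (by positivity)
  calc ∫ y in X, f y ∂μ' ≤ (∫ y in X, f y ∂μ) + M * tvDist μ μ' := hB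
    _ ≤ (∫ y in X, f y ∂μ) + K * tvDist μ μ' * ∫ y in X, f y ∂μ := by linarith
    _ = (1 + K * tvDist μ μ') * ∫ y in X, f y ∂μ := by ring

lemma le_of_forall_mul_exp {L C δ : ℝ} (h : ∀ n : ℕ, 1 ≤ n → L ≤ C * Real.exp (δ / n)) :
    L ≤ C := by
  have t1 : Filter.Tendsto (fun n : ℕ => δ / (n : ℝ)) Filter.atTop (nhds 0) :=
    tendsto_const_div_atTop_nhds_zero_nat δ
  have t2 : Filter.Tendsto (fun n : ℕ => C * Real.exp (δ / (n : ℝ))) Filter.atTop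
      (nhds (C * Real.exp 0)) :=
    Filter.Tendsto.const_mul C ((Real.continuous_exp.tendsto 0).comp t1)
  rw [Real.exp_zero, mul_one] at t2
  exact ge_of_tendsto t2 (Filter.eventually_atTop.2 ⟨1, h⟩)
lemma perstep {d : ℕ} {X : Set (Fin d → ℝ)} (hX : IsCompact X) (hXm : MeasurableSet X)
    (β : Measure (Fin d → ℝ)) [IsFiniteMeasure β]
    {W W' F : (Fin d → ℝ) → ℝ} (hWc : ContinuousOn W X) (hW'c : ContinuousOn W' X)
    (hFc : ContinuousOn F X) {s R : ℝ} (hs : 1 ≤ s) (hR : 1 ≤ R)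
    (hW0 : ∀ y ∈ X, 0 ≤ W y) (hW'0 : ∀ y ∈ X, 0 ≤ W' y)
    (h1 : ∀ y ∈ X, W y ≤ s * W' y) (h2 : ∀ y ∈ X, W' y ≤ s * W y)
    (hF1 : ∀ y ∈ X, 1 ≤ F y) (hFR : ∀ y ∈ X, F y ≤ R)
    (hZ : 0 < ∫ y in X, W y ∂β) (hZ' : 0 < ∫ y in X, W' y ∂β) :
    (∫ y in X, F y * W y ∂β) * (∫ y in X, W' y ∂β) ≤
      (1 + (1 - 1/s) * (R - 1)) * ((∫ y in X, F y * W' y ∂β) * (∫ y in X, W y ∂β)) := by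
  have hspos : (0:ℝ) < s := lt_of_lt_of_le one_pos hs
  set Z := ∫ y in X, W y ∂β with hZdef
  set Z' := ∫ y in X, W' y ∂β with hZ'def
  set mf : (Fin d → ℝ) → ℝ := fun y => min (W y / Z) (W' y / Z') with hmf
  have hmfc : ContinuousOn mf X := by
    have := (hWc.div_const Z).inf (hW'c.div_const Z')
    exact this
  have iW : IntegrableOn W X β := hWc.integrableOn_compact hX
  have iW' : IntegrableOn W' X β := hW'c.integrableOn_compact hX
  have imf : IntegrableOn mf X β := hmfc.integrableOn_compact hX
  have iFW : IntegrableOn (fun y => F y * W y) X β := (hFc.mul hWc).integrableOn_compact hX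
  have iFW' : IntegrableOn (fun y => F y * W' y) X β := (hFc.mul hW'c).integrableOn_compact hX
  have hZZ' : Z ≤ s * Z' := by
    have h := setIntegral_mono_on iW (iW'.const_mul s) hXm h1
    rwa [integral_const_mul] at h
  have hZ'Z : Z' ≤ s * Z := by
    have h := setIntegral_mono_on iW' (iW.const_mul s) hXm h2
    rwa [integral_const_mul] at h
  have hov : 1/s ≤ ∫ y in X, mf y ∂β := by
    rcases le_total Z' Z with hc | hc
    · have hpt : ∀ y ∈ X, W y / (s * Z') ≤ mf y := by
        intro y hy
        refine le_min ?_ ?_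
        · rw [div_le_div_iff₀ (by positivity) hZ]
          nlinarith [hW0 y hy]
        · rw [div_le_div_iff₀ (by positivity) hZ']
          nlinarith [hW'0 y hy, h1 y hy, mul_le_mul_of_nonneg_left hc (le_of_lt hspos)]
      have h := setIntegral_mono_on ((iW.div_const (s * Z'))) imf hXm hpt
      rw [integral_div] at h
      calc 1/s = Z' / (s * Z') := by field_simp
        _ ≤ Z / (s * Z') := by gcongr
        _ ≤ ∫ y in X, mf y ∂β := h
    · have hpt : ∀ y ∈ X, W' y / (s * Z) ≤ mf y := by
        intro y hy
        refine le_min ?_ ?_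
        · rw [div_le_div_iff₀ (by positivity) hZ]
          nlinarith [hW0 y hy, h2 y hy, mul_le_mul_of_nonneg_left hc (le_of_lt hspos)]
        · rw [div_le_div_iff₀ (by positivity) hZ']
          nlinarith [hW'0 y hy]
      have h := setIntegral_mono_on ((iW'.div_const (s * Z))) imf hXm hpt
      rw [integral_div] at h
      calc 1/s = Z / (s * Z) := by field_simp
        _ ≤ Z' / (s * Z) := by gcongr
        _ ≤ ∫ y in X, mf y ∂β := h
  have hintW : ∫ y in X, W y / Z ∂β = 1 := by
    rw [integral_div]; exact div_self (ne_of_gt hZ)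
  have hintW' : ∫ y in X, W' y / Z' ∂β = 1 := by
    rw [integral_div]; exact div_self (ne_of_gt hZ')
  have hovle : ∫ y in X, mf y ∂β ≤ 1 := by
    have h := setIntegral_mono_on imf (iW.div_const Z) hXm (fun y _ => min_le_left _ _)
    rwa [hintW] at h
  have hpt : ∀ y ∈ X, F y * W y / Z - F y * W' y / Z'
      ≤ R * (W y / Z - mf y) - (W' y / Z' - mf y) := by
    intro y hy
    have hmW : mf y ≤ W y / Z := min_le_left _ _
    have hmW' : mf y ≤ W' y / Z' := min_le_right _ _
    have a1 : F y * W y / Z ≤ F y * mf y + R * (W y / Z - mf y) := by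
      have e : F y * W y / Z = F y * mf y + F y * (W y / Z - mf y) := by ring
      rw [e]
      have := mul_le_mul_of_nonneg_right (hFR y hy) (sub_nonneg.2 hmW)
      linarith
    have a2 : F y * mf y + (W' y / Z' - mf y) ≤ F y * W' y / Z' := by
      have e : F y * W' y / Z' = F y * mf y + F y * (W' y / Z' - mf y) := by ring
      rw [e]
      have := mul_le_mul_of_nonneg_right (hF1 y hy) (sub_nonneg.2 hmW')
      linarith
    linarith
  have iA : IntegrableOn (fun y => W y / Z - mf y) X β := (iW.div_const Z).sub imf
  have iB : IntegrableOn (fun y => W' y / Z' - mf y) X β := (iW'.div_const Z').sub imf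
  have iRA : IntegrableOn (fun y => R * (W y / Z - mf y)) X β := iA.const_mul R
  have iL1 : IntegrableOn (fun y => F y * W y / Z) X β := iFW.div_const Z
  have iL2 : IntegrableOn (fun y => F y * W' y / Z') X β := iFW'.div_const Z'
  have iL : IntegrableOn (fun y => F y * W y / Z - F y * W' y / Z') X β := iL1.sub iL2
  have iR : IntegrableOn (fun y => R * (W y / Z - mf y) - (W' y / Z' - mf y)) X β := iRA.sub iB
  have hmono := setIntegral_mono_on iL iR hXm hpt
  have eL : ∫ y in X, (F y * W y / Z - F y * W' y / Z') ∂β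
      = (∫ y in X, F y * W y ∂β) / Z - (∫ y in X, F y * W' y ∂β) / Z' := by
    rw [integral_sub iL1 iL2, integral_div, integral_div]
  have eR : ∫ y in X, (R * (W y / Z - mf y) - (W' y / Z' - mf y)) ∂β
      = (R - 1) * (1 - ∫ y in X, mf y ∂β) := by
    rw [integral_sub iRA iB, integral_const_mul, integral_sub (iW.div_const Z) imf,
      integral_sub (iW'.div_const Z') imf, hintW, hintW']
    ring
  rw [eL, eR] at hmono
  have hkey : (∫ y in X, F y * W y ∂β) / Z ≤ (∫ y in X, F y * W' y ∂β) / Z'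
      + (R - 1) * (1 - 1/s) := by
    have h2' : (R - 1) * (1 - ∫ y in X, mf y ∂β) ≤ (R - 1) * (1 - 1/s) :=
      mul_le_mul_of_nonneg_left (by linarith) (by linarith)
    linarith
  have h3' : 1 ≤ (∫ y in X, F y * W' y ∂β) / Z' := by
    rw [le_div_iff₀ hZ', one_mul]
    exact setIntegral_mono_on iW' iFW' hXm (fun y hy => le_mul_of_one_le_left (hW'0 y hy) (hF1 y hy))
  have hfinal : (∫ y in X, F y * W y ∂β) / Z
      ≤ (1 + (1 - 1/s) * (R - 1)) * ((∫ y in X, F y * W' y ∂β) / Z') := by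
    have hτ0 : 0 ≤ 1 - 1/s := by
      have h : 1/s ≤ 1 := div_le_one_of_le₀ hs (le_of_lt hspos)
      linarith
    nlinarith [hkey, h3', mul_nonneg (mul_nonneg hτ0 (by linarith : (0:ℝ) ≤ R - 1))
      (by linarith : (0:ℝ) ≤ (∫ y in X, F y * W' y ∂β) / Z' - 1)]
  rw [div_le_iff₀ hZ] at hfinal
  calc (∫ y in X, F y * W y ∂β) * Z'
      ≤ ((1 + (1 - 1/s) * (R - 1)) * ((∫ y in X, F y * W' y ∂β) / Z') * Z) * Z' :=
        mul_le_mul_of_nonneg_right hfinal (le_of_lt hZ')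
    _ = (1 + (1 - 1/s) * (R - 1)) * ((∫ y in X, F y * W' y ∂β) * Z) := by
        field_simp
lemma core_contraction {d : ℕ} {X : Set (Fin d → ℝ)} (hX : IsCompact X) (hXm : MeasurableSet X)
    (β : Measure (Fin d → ℝ)) [IsFiniteMeasure β]
    {W W' g : (Fin d → ℝ) → ℝ} (hWc : ContinuousOn W X) (hW'c : ContinuousOn W' X)
    (hgc : ContinuousOn g X) {s m M : ℝ} (hs : 1 ≤ s) (hmM : m ≤ M)
    (hW0 : ∀ y ∈ X, 0 ≤ W y) (hW'0 : ∀ y ∈ X, 0 ≤ W' y)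
    (h1 : ∀ y ∈ X, W y ≤ s * W' y) (h2 : ∀ y ∈ X, W' y ≤ s * W y)
    (hg : ∀ y ∈ X, m ≤ g y ∧ g y ≤ M)
    (hZ : 0 < ∫ y in X, W y ∂β) (hZ' : 0 < ∫ y in X, W' y ∂β) :
    Real.log (∫ y in X, Real.exp (g y) * W y ∂β) - Real.log (∫ y in X, W y ∂β)
      - Real.log (∫ y in X, Real.exp (g y) * W' y ∂β) + Real.log (∫ y in X, W' y ∂β)
      ≤ (1 - 1/s) * (M - m) := by
  have hspos : (0:ℝ) < s := lt_of_lt_of_le one_pos hs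
  have hτ0 : 0 ≤ 1 - 1/s := by
    have h : 1/s ≤ 1 := div_le_one_of_le₀ hs (le_of_lt hspos)
    linarith
  refine le_of_forall_mul_exp (δ := M - m) ?_
  intro n hn
  have hn0 : (0:ℝ) < (n:ℝ) := by exact_mod_cast hn
  obtain ⟨δ, hδdef⟩ : ∃ t : ℝ, t = M - m := ⟨_, rfl⟩
  have hδ0 : 0 ≤ δ := by rw [hδdef]; linarith
  obtain ⟨z, hzdef⟩ : ∃ t : ℝ, t = δ / (n:ℝ) := ⟨_, rfl⟩
  have hz0 : 0 ≤ z := by rw [hzdef]; exact div_nonneg hδ0 (le_of_lt hn0)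
  obtain ⟨K, hKdef⟩ : ∃ t : ℝ, t = 1 + (1 - 1/s) * (Real.exp z - 1) := ⟨_, rfl⟩
  have hexpz1 : 1 ≤ Real.exp z := Real.one_le_exp hz0
  have hKpos : 0 < K := by
    have h := mul_nonneg hτ0 (by linarith : (0:ℝ) ≤ Real.exp z - 1)
    simp only [hKdef]
    linarith
  set ck : ℕ → ℝ := fun k => ∫ y in X, Real.exp ((k:ℝ)/(n:ℝ) * (g y - m)) * W y ∂β with hck
  set dk : ℕ → ℝ := fun k => ∫ y in X, Real.exp ((k:ℝ)/(n:ℝ) * (g y - m)) * W' y ∂β with hdk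
  have hθc : ∀ k : ℕ, ContinuousOn (fun y => Real.exp ((k:ℝ)/(n:ℝ) * (g y - m))) X :=
    fun k => Real.continuous_exp.comp_continuousOn
      (continuousOn_const.mul (hgc.sub continuousOn_const))
  have hθ1 : ∀ (k : ℕ), ∀ y ∈ X, 1 ≤ Real.exp ((k:ℝ)/(n:ℝ) * (g y - m)) := by
    intro k y hy
    refine Real.one_le_exp (mul_nonneg (by positivity) ?_)
    linarith [(hg y hy).1]
  have iW : IntegrableOn W X β := hWc.integrableOn_compact hX
  have iW' : IntegrableOn W' X β := hW'c.integrableOn_compact hX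
  have hckpos : ∀ k : ℕ, 0 < ck k := by
    intro k
    refine lt_of_lt_of_le hZ (setIntegral_mono_on iW
      (((hθc k).mul hWc).integrableOn_compact hX) hXm fun y hy => ?_)
    exact le_mul_of_one_le_left (hW0 y hy) (hθ1 k y hy)
  have hdkpos : ∀ k : ℕ, 0 < dk k := by
    intro k
    refine lt_of_lt_of_le hZ' (setIntegral_mono_on iW'
      (((hθc k).mul hW'c).integrableOn_compact hX) hXm fun y hy => ?_)
    exact le_mul_of_one_le_left (hW'0 y hy) (hθ1 k y hy)
  -- single step estimate
  have hstep : ∀ k : ℕ,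
      Real.log (ck (k+1)) - Real.log (ck k) - (Real.log (dk (k+1)) - Real.log (dk k))
        ≤ Real.log K := by
    intro k
    have hps := perstep (W := fun y => Real.exp ((k:ℝ)/(n:ℝ) * (g y - m)) * W y)
      (W' := fun y => Real.exp ((k:ℝ)/(n:ℝ) * (g y - m)) * W' y)
      (F := fun y => Real.exp ((g y - m)/(n:ℝ))) (s := s) (R := Real.exp z)
      hX hXm β ((hθc k).mul hWc) ((hθc k).mul hW'c)
      (Real.continuous_exp.comp_continuousOn ((hgc.sub continuousOn_const).div_const _))
      hs hexpz1
      (fun y hy => mul_nonneg (Real.exp_nonneg _) (hW0 y hy))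
      (fun y hy => mul_nonneg (Real.exp_nonneg _) (hW'0 y hy))
      (fun y hy => by
        calc Real.exp ((k:ℝ)/(n:ℝ) * (g y - m)) * W y
            ≤ Real.exp ((k:ℝ)/(n:ℝ) * (g y - m)) * (s * W' y) :=
              mul_le_mul_of_nonneg_left (h1 y hy) (Real.exp_nonneg _)
          _ = s * (Real.exp ((k:ℝ)/(n:ℝ) * (g y - m)) * W' y) := by ring)
      (fun y hy => by
        calc Real.exp ((k:ℝ)/(n:ℝ) * (g y - m)) * W' y
            ≤ Real.exp ((k:ℝ)/(n:ℝ) * (g y - m)) * (s * W y) :=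
              mul_le_mul_of_nonneg_left (h2 y hy) (Real.exp_nonneg _)
          _ = s * (Real.exp ((k:ℝ)/(n:ℝ) * (g y - m)) * W y) := by ring)
      (fun y hy => Real.one_le_exp (div_nonneg (by linarith [(hg y hy).1]) (le_of_lt hn0)))
      (fun y hy => by
        rw [Real.exp_le_exp, hzdef, hδdef]
        gcongr
        exact (hg y hy).2)
      (hckpos k) (hdkpos k)
    have hei : ∀ y, Real.exp ((g y - m)/(n:ℝ)) * (Real.exp ((k:ℝ)/(n:ℝ) * (g y - m)) * W y)
        = Real.exp (((k:ℕ)+1 : ℕ)/(n:ℝ) * (g y - m)) * W y := by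
      intro y
      rw [← mul_assoc, ← Real.exp_add]
      congr 2
      push_cast
      field_simp
      ring
    have hei' : ∀ y, Real.exp ((g y - m)/(n:ℝ)) * (Real.exp ((k:ℝ)/(n:ℝ) * (g y - m)) * W' y)
        = Real.exp (((k:ℕ)+1 : ℕ)/(n:ℝ) * (g y - m)) * W' y := by
      intro y
      rw [← mul_assoc, ← Real.exp_add]
      congr 2
      push_cast
      field_simp
      ring
    simp only [hei, hei'] at hps
    rw [← hKdef] at hps
    -- hps : ck (k+1) * dk k ≤ K * (dk (k+1) * ck k)
    have hL : Real.log (ck (k+1) * dk k) ≤ Real.log (K * (dk (k+1) * ck k)) := by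
      exact Real.log_le_log (mul_pos (hckpos (k+1)) (hdkpos k)) hps
    rw [Real.log_mul (ne_of_gt (hckpos (k+1))) (ne_of_gt (hdkpos k)),
        Real.log_mul (ne_of_gt hKpos) (ne_of_gt (mul_pos (hdkpos (k+1)) (hckpos k))),
        Real.log_mul (ne_of_gt (hdkpos (k+1))) (ne_of_gt (hckpos k))] at hL
    linarith
  have hsum : Real.log (ck n) - Real.log (ck 0) - (Real.log (dk n) - Real.log (dk 0))
      ≤ (n:ℝ) * Real.log K := by
    have h := Finset.sum_le_sum (f := fun k =>
        Real.log (ck (k+1)) - Real.log (ck k) - (Real.log (dk (k+1)) - Real.log (dk k)))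
      (g := fun _ => Real.log K) (s := Finset.range n) (fun k _ => hstep k)
    rw [Finset.sum_const, Finset.card_range, nsmul_eq_mul] at h
    have h2 : ∑ k ∈ Finset.range n,
        (Real.log (ck (k+1)) - Real.log (ck k) - (Real.log (dk (k+1)) - Real.log (dk k)))
        = (Real.log (ck n) - Real.log (ck 0)) - (Real.log (dk n) - Real.log (dk 0)) := by
      rw [Finset.sum_sub_distrib, Finset.sum_range_sub (fun k => Real.log (ck k)),
        Finset.sum_range_sub (fun k => Real.log (dk k))]
    rw [h2] at h
    exact h
  -- endpoint identifications
  have hc0 : ck 0 = ∫ y in X, W y ∂β := by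
    simp [hck]
  have hd0 : dk 0 = ∫ y in X, W' y ∂β := by
    simp [hdk]
  have hcn : ck n = (∫ y in X, Real.exp (g y) * W y ∂β) / Real.exp m := by
    have he : ∀ y : Fin d → ℝ, Real.exp ((n:ℝ)/(n:ℝ) * (g y - m)) * W y
        = Real.exp (g y) * W y / Real.exp m := by
      intro y
      rw [div_self (ne_of_gt hn0), one_mul, Real.exp_sub]
      ring
    simp only [hck, he]
    rw [integral_div]
  have hdn : dk n = (∫ y in X, Real.exp (g y) * W' y ∂β) / Real.exp m := by
    have he : ∀ y : Fin d → ℝ, Real.exp ((n:ℝ)/(n:ℝ) * (g y - m)) * W' y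
        = Real.exp (g y) * W' y / Real.exp m := by
      intro y
      rw [div_self (ne_of_gt hn0), one_mul, Real.exp_sub]
      ring
    simp only [hdk, he]
    rw [integral_div]
  have hIg : 0 < ∫ y in X, Real.exp (g y) * W y ∂β := by
    have : (∫ y in X, Real.exp (g y) * W y ∂β) = ck n * Real.exp m := by
      rw [hcn, div_mul_cancel₀ _ (Real.exp_ne_zero m)]
    rw [this]
    exact mul_pos (hckpos n) (Real.exp_pos m)
  have hIg' : 0 < ∫ y in X, Real.exp (g y) * W' y ∂β := by
    have : (∫ y in X, Real.exp (g y) * W' y ∂β) = dk n * Real.exp m := by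
      rw [hdn, div_mul_cancel₀ _ (Real.exp_ne_zero m)]
    rw [this]
    exact mul_pos (hdkpos n) (Real.exp_pos m)
  have hlogcn : Real.log (ck n) = Real.log (∫ y in X, Real.exp (g y) * W y ∂β) - m := by
    rw [hcn, Real.log_div (ne_of_gt hIg) (Real.exp_ne_zero m), Real.log_exp]
  have hlogdn : Real.log (dk n) = Real.log (∫ y in X, Real.exp (g y) * W' y ∂β) - m := by
    rw [hdn, Real.log_div (ne_of_gt hIg') (Real.exp_ne_zero m), Real.log_exp]
  -- final numeric bound
  have hlogK : Real.log K ≤ (1 - 1/s) * (Real.exp z - 1) := by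
    have h2 := Real.log_le_sub_one_of_pos hKpos
    have h3 : K - 1 = (1 - 1/s) * (Real.exp z - 1) := by rw [hKdef]; ring
    linarith
  have hez : Real.exp z - 1 ≤ z * Real.exp z := by
    have h := Real.add_one_le_exp (-z)
    rw [Real.exp_neg] at h
    have h2 := mul_le_mul_of_nonneg_right h (le_of_lt (Real.exp_pos z))
    rw [inv_mul_cancel₀ (Real.exp_ne_zero z)] at h2
    nlinarith [h2]
  have hnz : (n:ℝ) * z = δ := by
    rw [hzdef, mul_div_cancel₀ _ (ne_of_gt hn0)]
  have hfin : (n:ℝ) * Real.log K ≤ (1 - 1/s) * (M - m) * Real.exp ((M - m)/(n:ℝ)) := by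
    have h1' : (n:ℝ) * Real.log K ≤ (n:ℝ) * ((1 - 1/s) * (z * Real.exp z)) := by
      refine mul_le_mul_of_nonneg_left ?_ (le_of_lt hn0)
      calc Real.log K ≤ (1 - 1/s) * (Real.exp z - 1) := hlogK
        _ ≤ (1 - 1/s) * (z * Real.exp z) := mul_le_mul_of_nonneg_left hez hτ0
    calc (n:ℝ) * Real.log K ≤ (n:ℝ) * ((1 - 1/s) * (z * Real.exp z)) := h1'
      _ = (1 - 1/s) * ((n:ℝ) * z) * Real.exp z := by ring
      _ = (1 - 1/s) * (M - m) * Real.exp ((M - m)/(n:ℝ)) := by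
          rw [hnz, hzdef, hδdef]
  calc Real.log (∫ y in X, Real.exp (g y) * W y ∂β) - Real.log (∫ y in X, W y ∂β)
      - Real.log (∫ y in X, Real.exp (g y) * W' y ∂β) + Real.log (∫ y in X, W' y ∂β)
      = Real.log (ck n) - Real.log (ck 0) - (Real.log (dk n) - Real.log (dk 0)) := by
        rw [hlogcn, hlogdn, hc0, hd0]; ring
    _ ≤ (n:ℝ) * Real.log K := hsum
    _ ≤ (1 - 1/s) * (M - m) * Real.exp ((M - m)/(n:ℝ)) := hfin
lemma osc_le {E : Type*} {X : Set E} {x₀ : E} (hx₀ : x₀ ∈ X) {f : E → ℝ} {b : ℝ}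
    (h : ∀ x ∈ X, ∀ x' ∈ X, f x - f x' ≤ b) :
    sSup (f '' X) - sInf (f '' X) ≤ b := by
  have hne : (f '' X).Nonempty := ⟨f x₀, ⟨x₀, hx₀, rfl⟩⟩
  have h1 : sSup (f '' X) ≤ b + sInf (f '' X) := by
    refine csSup_le hne ?_
    rintro r ⟨x, hx, rfl⟩
    have h2 : f x - b ≤ sInf (f '' X) := by
      refine le_csInf hne ?_
      rintro r' ⟨x', hx', rfl⟩
      linarith [h x hx x' hx']
    linarith
  linarith

set_option maxHeartbeats 2000000 in
theorem sinkhorn_potentials_lipschitz_tv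
    (d : ℕ) (X : Set (Fin d → ℝ)) (hX : IsCompact X) (hne : X.Nonempty)
    (x₀ : Fin d → ℝ) (hx₀ : x₀ ∈ X)
    (D ε : ℝ) (hD : 0 ≤ D) (hε : 0 < ε)
    (c : (Fin d → ℝ) → (Fin d → ℝ) → ℝ)
    (hc : Continuous fun p : (Fin d → ℝ) × (Fin d → ℝ) => c p.1 p.2)
    (hcsym : ∀ x y, c x y = c y x)
    (hc0 : ∀ x ∈ X, ∀ y ∈ X, 0 ≤ c x y)
    (hcD : ∀ x ∈ X, ∀ y ∈ X, c x y ≤ D)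
    (α β α' β' : Measure (Fin d → ℝ))
    [IsProbabilityMeasure α] [IsProbabilityMeasure β]
    [IsProbabilityMeasure α'] [IsProbabilityMeasure β']
    (hα : α X = 1) (hβ : β X = 1) (hα' : α' X = 1) (hβ' : β' X = 1)
    (u v u' v' : (Fin d → ℝ) → ℝ)
    (hu : ContinuousOn u X) (hv : ContinuousOn v X)
    (hu' : ContinuousOn u' X) (hv' : ContinuousOn v' X)
    (hfix1 : ∀ x ∈ X,
      Real.exp (-(u x) / ε) = ∫ y in X, Real.exp ((v y - c x y) / ε) ∂β)
    (hfix2 : ∀ y ∈ X,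
      Real.exp (-(v y) / ε) = ∫ x in X, Real.exp ((u x - c x y) / ε) ∂α)
    (hfix1' : ∀ x ∈ X,
      Real.exp (-(u' x) / ε) = ∫ y in X, Real.exp ((v' y - c x y) / ε) ∂β')
    (hfix2' : ∀ y ∈ X,
      Real.exp (-(v' y) / ε) = ∫ x in X, Real.exp ((u' x - c x y) / ε) ∂α')
    (hu0 : u x₀ = 0) (hu'0 : u' x₀ = 0) :
    supNormOn X (fun x => u x - u' x) ≤
      2 * ε * Real.exp (3 * D / ε) * (tvDist α α' + tvDist β β') := by
  have hXm : MeasurableSet X := hX.isClosed.measurableSet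
  obtain ⟨s, hsdef⟩ : ∃ t : ℝ, t = Real.exp (D/ε) := ⟨_, rfl⟩
  have hs1 : 1 ≤ s := by rw [hsdef]; exact Real.one_le_exp (by positivity)
  have hspos : (0:ℝ) < s := lt_of_lt_of_le one_pos hs1
  obtain ⟨K2, hK2def⟩ : ∃ t : ℝ, t = Real.exp (2*D/ε) := ⟨_, rfl⟩
  have hK21 : 1 ≤ K2 := by rw [hK2def]; exact Real.one_le_exp (by positivity)
  have hTα0 : 0 ≤ tvDist α α' := tvDist_nonneg α α'
  have hTβ0 : 0 ≤ tvDist β β' := tvDist_nonneg β β'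
  have hdivmono : ∀ {a b : ℝ}, a ≤ b → a / ε ≤ b / ε := by
    intro a b h
    rw [div_le_div_iff₀ hε hε]
    nlinarith [h, hε]
  -- continuity of slices of the cost
  have hcy : ∀ x : Fin d → ℝ, Continuous fun y => c x y :=
    fun x => hc.comp (Continuous.prodMk_right x)
  have hcx : ∀ y : Fin d → ℝ, Continuous fun x => c x y :=
    fun y => hc.comp (continuous_id.prodMk continuous_const)
  -- continuity of integrands
  have hfc : ∀ x : Fin d → ℝ, ContinuousOn (fun y => Real.exp ((v y - c x y)/ε)) X :=
    fun x => Real.continuous_exp.comp_continuousOn ((hv.sub (hcy x).continuousOn).div_const ε)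
  have hf'c : ∀ x : Fin d → ℝ, ContinuousOn (fun y => Real.exp ((v' y - c x y)/ε)) X :=
    fun x => Real.continuous_exp.comp_continuousOn ((hv'.sub (hcy x).continuousOn).div_const ε)
  have hhc : ∀ y : Fin d → ℝ, ContinuousOn (fun x => Real.exp ((u x - c x y)/ε)) X :=
    fun y => Real.continuous_exp.comp_continuousOn ((hu.sub (hcx y).continuousOn).div_const ε)
  have hh'c : ∀ y : Fin d → ℝ, ContinuousOn (fun x => Real.exp ((u' x - c x y)/ε)) X :=
    fun y => Real.continuous_exp.comp_continuousOn ((hu'.sub (hcx y).continuousOn).div_const ε)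
  -- positivity of the fixed-point integrals
  have hIβ : ∀ x ∈ X, 0 < ∫ y in X, Real.exp ((v y - c x y)/ε) ∂β := by
    intro x hx; rw [← hfix1 x hx]; exact Real.exp_pos _
  have hIβ' : ∀ x ∈ X, 0 < ∫ y in X, Real.exp ((v' y - c x y)/ε) ∂β' := by
    intro x hx; rw [← hfix1' x hx]; exact Real.exp_pos _
  have hIα : ∀ y ∈ X, 0 < ∫ x in X, Real.exp ((u x - c x y)/ε) ∂α := by
    intro y hy; rw [← hfix2 y hy]; exact Real.exp_pos _
  have hIα' : ∀ y ∈ X, 0 < ∫ x in X, Real.exp ((u' x - c x y)/ε) ∂α' := by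
    intro y hy; rw [← hfix2' y hy]; exact Real.exp_pos _
  -- mixed integrals are positive as well
  have hIβmix : ∀ x ∈ X, 0 < ∫ y in X, Real.exp ((v' y - c x y)/ε) ∂β :=
    fun x hx => setint_pos hX hXm hx₀ β hβ (hf'c x) (fun y _ => Real.exp_pos _)
  have hIαmix : ∀ y ∈ X, 0 < ∫ x in X, Real.exp ((u' x - c x y)/ε) ∂α :=
    fun y hy => setint_pos hX hXm hx₀ α hα (hh'c y) (fun x _ => Real.exp_pos _)
  -- log identities
  have hlog1 : ∀ x ∈ X, Real.log (∫ y in X, Real.exp ((v y - c x y)/ε) ∂β) = -(u x)/ε := by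
    intro x hx; rw [← hfix1 x hx, Real.log_exp]
  have hlog1' : ∀ x ∈ X, Real.log (∫ y in X, Real.exp ((v' y - c x y)/ε) ∂β') = -(u' x)/ε := by
    intro x hx; rw [← hfix1' x hx, Real.log_exp]
  have hlog2 : ∀ y ∈ X, Real.log (∫ x in X, Real.exp ((u x - c x y)/ε) ∂α) = -(v y)/ε := by
    intro y hy; rw [← hfix2 y hy, Real.log_exp]
  have hlog2' : ∀ y ∈ X, Real.log (∫ x in X, Real.exp ((u' x - c x y)/ε) ∂α') = -(v' y)/ε := by
    intro y hy; rw [← hfix2' y hy, Real.log_exp]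
  -- oscillation bounds for u' and v'
  have hosc_u' : ∀ x ∈ X, ∀ x' ∈ X, u' x' - u' x ≤ D := by
    intro x hx x' hx'
    have hmono : (∫ y in X, Real.exp ((v' y - c x y)/ε) ∂β')
        ≤ ∫ y in X, Real.exp (D/ε) * Real.exp ((v' y - c x' y)/ε) ∂β' := by
      refine setIntegral_mono_on ((hf'c x).integrableOn_compact hX)
        ((continuousOn_const.mul (hf'c x')).integrableOn_compact hX) hXm fun y hy => ?_
      rw [← Real.exp_add, ← add_div]
      refine Real.exp_le_exp.2 (hdivmono ?_)
      linarith [hcD x' hx' y hy, hc0 x hx y hy]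
    rw [integral_const_mul, ← hfix1' x hx, ← hfix1' x' hx', ← Real.exp_add,
      ← add_div] at hmono
    have h2 := Real.exp_le_exp.1 hmono
    have h3 := mul_le_mul_of_nonneg_right h2 (le_of_lt hε)
    rw [div_mul_cancel₀ _ (ne_of_gt hε), div_mul_cancel₀ _ (ne_of_gt hε)] at h3
    linarith
  have hosc_v' : ∀ y ∈ X, ∀ y' ∈ X, v' y' - v' y ≤ D := by
    intro y hy y' hy'
    have hmono : (∫ x in X, Real.exp ((u' x - c x y)/ε) ∂α')
        ≤ ∫ x in X, Real.exp (D/ε) * Real.exp ((u' x - c x y')/ε) ∂α' := by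
      refine setIntegral_mono_on ((hh'c y).integrableOn_compact hX)
        ((continuousOn_const.mul (hh'c y')).integrableOn_compact hX) hXm fun x hx => ?_
      rw [← Real.exp_add, ← add_div]
      refine Real.exp_le_exp.2 (hdivmono ?_)
      linarith [hcD x hx y' hy', hc0 x hx y hy]
    rw [integral_const_mul, ← hfix2' y hy, ← hfix2' y' hy', ← Real.exp_add,
      ← add_div] at hmono
    have h2 := Real.exp_le_exp.1 hmono
    have h3 := mul_le_mul_of_nonneg_right h2 (le_of_lt hε)
    rw [div_mul_cancel₀ _ (ne_of_gt hε), div_mul_cancel₀ _ (ne_of_gt hε)] at h3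
    linarith
  -- perturbation (A-term) bounds, beta side
  have hratioβ : ∀ x ∈ X, ∀ y ∈ X, ∀ y' ∈ X,
      Real.exp ((v' y - c x y)/ε) ≤ K2 * Real.exp ((v' y' - c x y')/ε) := by
    intro x hx y hy y' hy'
    rw [hK2def, ← Real.exp_add, ← add_div]
    refine Real.exp_le_exp.2 (hdivmono ?_)
    linarith [hosc_v' y' hy' y hy, hcD x hx y' hy', hc0 x hx y hy]
  have hratioα : ∀ y ∈ X, ∀ x ∈ X, ∀ x' ∈ X,
      Real.exp ((u' x - c x y)/ε) ≤ K2 * Real.exp ((u' x' - c x' y)/ε) := by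
    intro y hy x hx x' hx'
    rw [hK2def, ← Real.exp_add, ← add_div]
    refine Real.exp_le_exp.2 (hdivmono ?_)
    linarith [hosc_u' x' hx' x hx, hcD x' hx' y hy, hc0 x hx y hy]
  have hlgβpos : (0:ℝ) < 1 + K2 * tvDist β β' := by nlinarith
  have hlgαpos : (0:ℝ) < 1 + K2 * tvDist α α' := by nlinarith
  have hAβ1 : ∀ x ∈ X, Real.log (∫ y in X, Real.exp ((v' y - c x y)/ε) ∂β')
      ≤ Real.log (1 + K2 * tvDist β β')
        + Real.log (∫ y in X, Real.exp ((v' y - c x y)/ε) ∂β) := by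
    intro x hx
    have hp := pert hX hXm hx₀ β β' hβ (hf'c x) hK21 (fun y _ => Real.exp_pos _)
      (fun y hy y' hy' => hratioβ x hx y hy y' hy')
    calc Real.log (∫ y in X, Real.exp ((v' y - c x y)/ε) ∂β')
        ≤ Real.log ((1 + K2 * tvDist β β') * ∫ y in X, Real.exp ((v' y - c x y)/ε) ∂β) :=
          Real.log_le_log (hIβ' x hx) hp
      _ = _ := Real.log_mul (ne_of_gt hlgβpos) (ne_of_gt (hIβmix x hx))
  have hAβ2 : ∀ x ∈ X, Real.log (∫ y in X, Real.exp ((v' y - c x y)/ε) ∂β)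
      ≤ Real.log (1 + K2 * tvDist β β')
        + Real.log (∫ y in X, Real.exp ((v' y - c x y)/ε) ∂β') := by
    intro x hx
    have hp := pert hX hXm hx₀ β' β hβ' (hf'c x) hK21 (fun y _ => Real.exp_pos _)
      (fun y hy y' hy' => hratioβ x hx y hy y' hy')
    rw [tvDist_comm β' β] at hp
    calc Real.log (∫ y in X, Real.exp ((v' y - c x y)/ε) ∂β)
        ≤ Real.log ((1 + K2 * tvDist β β') * ∫ y in X, Real.exp ((v' y - c x y)/ε) ∂β') :=
          Real.log_le_log (hIβmix x hx) hp
      _ = _ := Real.log_mul (ne_of_gt hlgβpos) (ne_of_gt (hIβ' x hx))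
  have hAα1 : ∀ y ∈ X, Real.log (∫ x in X, Real.exp ((u' x - c x y)/ε) ∂α)
      ≤ Real.log (1 + K2 * tvDist α α')
        + Real.log (∫ x in X, Real.exp ((u' x - c x y)/ε) ∂α') := by
    intro y hy
    have hp := pert hX hXm hx₀ α' α hα' (hh'c y) hK21 (fun x _ => Real.exp_pos _)
      (fun x hx x' hx' => hratioα y hy x hx x' hx')
    rw [tvDist_comm α' α] at hp
    calc Real.log (∫ x in X, Real.exp ((u' x - c x y)/ε) ∂α)
        ≤ Real.log ((1 + K2 * tvDist α α') * ∫ x in X, Real.exp ((u' x - c x y)/ε) ∂α') :=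
          Real.log_le_log (hIαmix y hy) hp
      _ = _ := Real.log_mul (ne_of_gt hlgαpos) (ne_of_gt (hIα' y hy))
  have hAα2 : ∀ y ∈ X, Real.log (∫ x in X, Real.exp ((u' x - c x y)/ε) ∂α')
      ≤ Real.log (1 + K2 * tvDist α α')
        + Real.log (∫ x in X, Real.exp ((u' x - c x y)/ε) ∂α) := by
    intro y hy
    have hp := pert hX hXm hx₀ α α' hα (hh'c y) hK21 (fun x _ => Real.exp_pos _)
      (fun x hx x' hx' => hratioα y hy x hx x' hx')
    calc Real.log (∫ x in X, Real.exp ((u' x - c x y)/ε) ∂α')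
        ≤ Real.log ((1 + K2 * tvDist α α') * ∫ x in X, Real.exp ((u' x - c x y)/ε) ∂α) :=
          Real.log_le_log (hIα' y hy) hp
      _ = _ := Real.log_mul (ne_of_gt hlgαpos) (ne_of_gt (hIαmix y hy))
  -- sup/inf of the potential differences
  have hφc : ContinuousOn (fun x => u x - u' x) X := hu.sub hu'
  have hψc : ContinuousOn (fun y => v' y - v y) X := hv'.sub hv
  obtain ⟨Sφ, hSφdef⟩ : ∃ t : ℝ, t = sSup ((fun x => u x - u' x) '' X) := ⟨_, rfl⟩
  obtain ⟨Iφ, hIφdef⟩ : ∃ t : ℝ, t = sInf ((fun x => u x - u' x) '' X) := ⟨_, rfl⟩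
  obtain ⟨Sψ, hSψdef⟩ : ∃ t : ℝ, t = sSup ((fun y => v' y - v y) '' X) := ⟨_, rfl⟩
  obtain ⟨Iψ, hIψdef⟩ : ∃ t : ℝ, t = sInf ((fun y => v' y - v y) '' X) := ⟨_, rfl⟩
  have hφub : ∀ x ∈ X, u x - u' x ≤ Sφ := fun x hx =>
    hSφdef ▸ le_csSup (hX.bddAbove_image hφc) ⟨x, hx, rfl⟩
  have hφlb : ∀ x ∈ X, Iφ ≤ u x - u' x := fun x hx =>
    hIφdef ▸ csInf_le (hX.bddBelow_image hφc) ⟨x, hx, rfl⟩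
  have hψub : ∀ y ∈ X, v' y - v y ≤ Sψ := fun y hy =>
    hSψdef ▸ le_csSup (hX.bddAbove_image hψc) ⟨y, hy, rfl⟩
  have hψlb : ∀ y ∈ X, Iψ ≤ v' y - v y := fun y hy =>
    hIψdef ▸ csInf_le (hX.bddBelow_image hψc) ⟨y, hy, rfl⟩
  -- pointwise oscillation estimate for u - u'
  have hC1 : ∀ x ∈ X, ∀ x' ∈ X, (u x - u' x) - (u x' - u' x')
      ≤ 2*ε*Real.log (1 + K2 * tvDist β β') + (1 - 1/s)*(Sψ - Iψ) := by
    intro x hx x' hx'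
    have hr1 : ∀ y ∈ X, Real.exp ((v y - c x y)/ε) ≤ s * Real.exp ((v y - c x' y)/ε) := by
      intro y hy
      rw [hsdef, ← Real.exp_add, ← add_div]
      refine Real.exp_le_exp.2 (hdivmono ?_)
      linarith [hcD x' hx' y hy, hc0 x hx y hy]
    have hr2 : ∀ y ∈ X, Real.exp ((v y - c x' y)/ε) ≤ s * Real.exp ((v y - c x y)/ε) := by
      intro y hy
      rw [hsdef, ← Real.exp_add, ← add_div]
      refine Real.exp_le_exp.2 (hdivmono ?_)
      linarith [hcD x hx y hy, hc0 x' hx' y hy]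
    have hcore := core_contraction hX hXm β
      (W := fun y => Real.exp ((v y - c x y)/ε)) (W' := fun y => Real.exp ((v y - c x' y)/ε))
      (g := fun y => (v' y - v y)/ε)
      (hfc x) (hfc x') (hψc.div_const ε) hs1
      (hdivmono (by linarith [hψlb x₀ hx₀, hψub x₀ hx₀]))
      (fun y _ => Real.exp_nonneg _) (fun y _ => Real.exp_nonneg _)
      hr1 hr2
      (fun y hy => ⟨hdivmono (hψlb y hy), hdivmono (hψub y hy)⟩)
      (hIβ x hx) (hIβ x' hx')
    have hiden : ∀ y : Fin d → ℝ, Real.exp ((v' y - v y)/ε) * Real.exp ((v y - c x y)/ε)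
        = Real.exp ((v' y - c x y)/ε) := by
      intro y
      rw [← Real.exp_add, ← add_div]
      congr 1
      ring
    have hiden' : ∀ y : Fin d → ℝ, Real.exp ((v' y - v y)/ε) * Real.exp ((v y - c x' y)/ε)
        = Real.exp ((v' y - c x' y)/ε) := by
      intro y
      rw [← Real.exp_add, ← add_div]
      congr 1
      ring
    simp only [hiden, hiden'] at hcore
    rw [hlog1 x hx, hlog1 x' hx'] at hcore
    have hA1 := hAβ1 x hx
    rw [hlog1' x hx] at hA1
    have hA2 := hAβ2 x' hx'
    rw [hlog1' x' hx'] at hA2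
    have keyε : (u x)/ε - (u' x)/ε - ((u x')/ε - (u' x')/ε)
        ≤ 2*Real.log (1 + K2 * tvDist β β') + (1 - 1/s)*(Sψ/ε - Iψ/ε) := by
      have hn1 : -(u x)/ε = -((u x)/ε) := by ring
      have hn2 : -(u x')/ε = -((u x')/ε) := by ring
      have hn3 : -(u' x)/ε = -((u' x)/ε) := by ring
      have hn4 : -(u' x')/ε = -((u' x')/ε) := by ring
      rw [hn1, hn2] at hcore
      rw [hn3] at hA1
      rw [hn4] at hA2
      linarith [hA1, hA2, hcore]
    have h5 := mul_le_mul_of_nonneg_left keyε (le_of_lt hε)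
    have e1 : ε * ((u x)/ε - (u' x)/ε - ((u x')/ε - (u' x')/ε))
        = (u x - u' x) - (u x' - u' x') := by
      field_simp
    have e2 : ε * (2*Real.log (1 + K2 * tvDist β β') + (1 - 1/s)*(Sψ/ε - Iψ/ε))
        = 2*ε*Real.log (1 + K2 * tvDist β β') + (1 - 1/s)*(Sψ - Iψ) := by
      field_simp
    rw [e1, e2] at h5
    exact h5
  -- pointwise oscillation estimate for v' - v
  have hC2 : ∀ y ∈ X, ∀ y' ∈ X, (v' y - v y) - (v' y' - v y')
      ≤ 2*ε*Real.log (1 + K2 * tvDist α α') + (1 - 1/s)*(Sφ - Iφ) := by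
    intro y hy y' hy'
    have hr1 : ∀ x ∈ X, Real.exp ((u' x - c x y)/ε) ≤ s * Real.exp ((u' x - c x y')/ε) := by
      intro x hx
      rw [hsdef, ← Real.exp_add, ← add_div]
      refine Real.exp_le_exp.2 (hdivmono ?_)
      linarith [hcD x hx y' hy', hc0 x hx y hy]
    have hr2 : ∀ x ∈ X, Real.exp ((u' x - c x y')/ε) ≤ s * Real.exp ((u' x - c x y)/ε) := by
      intro x hx
      rw [hsdef, ← Real.exp_add, ← add_div]
      refine Real.exp_le_exp.2 (hdivmono ?_)
      linarith [hcD x hx y hy, hc0 x hx y' hy']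
    have hcore := core_contraction hX hXm α
      (W := fun x => Real.exp ((u' x - c x y)/ε)) (W' := fun x => Real.exp ((u' x - c x y')/ε))
      (g := fun x => (u x - u' x)/ε)
      (hh'c y) (hh'c y') (hφc.div_const ε) hs1
      (hdivmono (by linarith [hφlb x₀ hx₀, hφub x₀ hx₀]))
      (fun x _ => Real.exp_nonneg _) (fun x _ => Real.exp_nonneg _)
      hr1 hr2
      (fun x hx => ⟨hdivmono (hφlb x hx), hdivmono (hφub x hx)⟩)
      (hIαmix y hy) (hIαmix y' hy')
    have hiden : ∀ x : Fin d → ℝ, Real.exp ((u x - u' x)/ε) * Real.exp ((u' x - c x y)/ε)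
        = Real.exp ((u x - c x y)/ε) := by
      intro x
      rw [← Real.exp_add, ← add_div]
      congr 1
      ring
    have hiden' : ∀ x : Fin d → ℝ, Real.exp ((u x - u' x)/ε) * Real.exp ((u' x - c x y')/ε)
        = Real.exp ((u x - c x y')/ε) := by
      intro x
      rw [← Real.exp_add, ← add_div]
      congr 1
      ring
    simp only [hiden, hiden'] at hcore
    rw [hlog2 y hy, hlog2 y' hy'] at hcore
    have hA1 := hAα1 y hy
    rw [hlog2' y hy] at hA1
    have hA2 := hAα2 y' hy'
    rw [hlog2' y' hy'] at hA2
    have keyε : (v' y)/ε - (v y)/ε - ((v' y')/ε - (v y')/ε)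
        ≤ 2*Real.log (1 + K2 * tvDist α α') + (1 - 1/s)*(Sφ/ε - Iφ/ε) := by
      have hn1 : -(v y)/ε = -((v y)/ε) := by ring
      have hn2 : -(v y')/ε = -((v y')/ε) := by ring
      have hn3 : -(v' y)/ε = -((v' y)/ε) := by ring
      have hn4 : -(v' y')/ε = -((v' y')/ε) := by ring
      rw [hn1, hn2] at hcore
      rw [hn3] at hA1
      rw [hn4] at hA2
      linarith [hA1, hA2, hcore]
    have h5 := mul_le_mul_of_nonneg_left keyε (le_of_lt hε)
    have e1 : ε * ((v' y)/ε - (v y)/ε - ((v' y')/ε - (v y')/ε))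
        = (v' y - v y) - (v' y' - v y') := by
      field_simp
    have e2 : ε * (2*Real.log (1 + K2 * tvDist α α') + (1 - 1/s)*(Sφ/ε - Iφ/ε))
        = 2*ε*Real.log (1 + K2 * tvDist α α') + (1 - 1/s)*(Sφ - Iφ) := by
      field_simp
    rw [e1, e2] at h5
    exact h5
  -- oscillation system
  have hP : Sφ - Iφ ≤ 2*ε*Real.log (1 + K2 * tvDist β β') + (1 - 1/s)*(Sψ - Iψ) := by
    rw [hSφdef, hIφdef]
    exact osc_le hx₀ hC1
  have hQ : Sψ - Iψ ≤ 2*ε*Real.log (1 + K2 * tvDist α α') + (1 - 1/s)*(Sφ - Iφ) := by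
    rw [hSψdef, hIψdef]
    exact osc_le hx₀ hC2
  -- numeric resolution
  have hτ0 : 0 ≤ 1 - 1/s := by
    have h : 1/s ≤ 1 := div_le_one_of_le₀ hs1 hspos.le
    linarith
  have hτ1 : 1 - 1/s ≤ 1 := by
    have h : 0 < 1/s := div_pos one_pos hspos
    linarith
  have hP0 : 0 ≤ Sφ - Iφ := by linarith [hφlb x₀ hx₀, hφub x₀ hx₀]
  have hlgβ0 : 0 ≤ Real.log (1 + K2 * tvDist β β') := Real.log_nonneg (by nlinarith)
  have hlgα0 : 0 ≤ Real.log (1 + K2 * tvDist α α') := Real.log_nonneg (by nlinarith)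
  have hlgβ : Real.log (1 + K2 * tvDist β β') ≤ K2 * tvDist β β' := by
    have h := Real.log_le_sub_one_of_pos hlgβpos
    linarith
  have hlgα : Real.log (1 + K2 * tvDist α α') ≤ K2 * tvDist α α' := by
    have h := Real.log_le_sub_one_of_pos hlgαpos
    linarith
  have h6 : Sφ - Iφ ≤ 2*ε*Real.log (1 + K2 * tvDist β β')
      + (1 - 1/s)*(2*ε*Real.log (1 + K2 * tvDist α α') + (1 - 1/s)*(Sφ - Iφ)) := by
    have := mul_le_mul_of_nonneg_left hQ hτ0
    linarith
  have h7 : (1 - (1 - 1/s)^2)*(Sφ - Iφ) ≤ 2*ε*Real.log (1 + K2 * tvDist β β')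
      + (1 - 1/s)*(2*ε*Real.log (1 + K2 * tvDist α α')) := by nlinarith [h6]
  have h8 : 2*ε*Real.log (1 + K2 * tvDist β β')
      + (1 - 1/s)*(2*ε*Real.log (1 + K2 * tvDist α α'))
      ≤ 2*ε*K2*(tvDist α α' + tvDist β β') := by
    have hm1 : (1 - 1/s)*(2*ε*Real.log (1 + K2 * tvDist α α'))
        ≤ 1*(2*ε*Real.log (1 + K2 * tvDist α α')) :=
      mul_le_mul_of_nonneg_right hτ1 (by positivity)
    have hm2 : 2*ε*Real.log (1 + K2 * tvDist β β') ≤ 2*ε*(K2 * tvDist β β') := by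
      have := mul_le_mul_of_nonneg_left hlgβ (by linarith : (0:ℝ) ≤ 2*ε)
      linarith
    have hm3 : 2*ε*Real.log (1 + K2 * tvDist α α') ≤ 2*ε*(K2 * tvDist α α') := by
      have := mul_le_mul_of_nonneg_left hlgα (by linarith : (0:ℝ) ≤ 2*ε)
      linarith
    nlinarith [hm1, hm2, hm3]
  have h9 : 1/s ≤ 1 - (1 - 1/s)^2 := by
    have hq : 0 ≤ (1/s)*(1 - 1/s) := mul_nonneg (by positivity) hτ0
    nlinarith [hq]
  have h10 : (1/s)*(Sφ - Iφ) ≤ (1 - (1 - 1/s)^2)*(Sφ - Iφ) :=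
    mul_le_mul_of_nonneg_right h9 hP0
  have h11 : Sφ - Iφ ≤ s*(2*ε*K2*(tvDist α α' + tvDist β β')) := by
    have h12 : (1/s)*(Sφ - Iφ) ≤ 2*ε*K2*(tvDist α α' + tvDist β β') := by linarith
    have h13 := mul_le_mul_of_nonneg_left h12 hspos.le
    have e : s*((1/s)*(Sφ - Iφ)) = Sφ - Iφ := by field_simp
    rw [e] at h13
    exact h13
  have hexp3 : Real.exp (3*D/ε) = K2 * s := by
    rw [hK2def, hsdef, ← Real.exp_add, ← add_div]
    congr 1
    ring
  have hPG : Sφ - Iφ ≤ 2*ε*Real.exp (3*D/ε)*(tvDist α α' + tvDist β β') := by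
    rw [hexp3]
    nlinarith [h11]
  -- conclude
  have hG0 : 0 ≤ 2*ε*Real.exp (3*D/ε)*(tvDist α α' + tvDist β β') := by
    have h1 : (0:ℝ) ≤ 2*ε*Real.exp (3*D/ε) :=
      mul_nonneg (mul_nonneg (by norm_num) hε.le) (Real.exp_nonneg _)
    exact mul_nonneg h1 (by linarith)
  unfold supNormOn
  refine Real.sSup_le ?_ hG0
  rintro r ⟨x, hx, rfl⟩
  have h1 : u x - u' x ≤ Sφ := hφub x hx
  have h2 : Iφ ≤ u x - u' x := hφlb x hx
  have hmem0 : (0:ℝ) ∈ (fun x => u x - u' x) '' X := ⟨x₀, hx₀, by show u x₀ - u' x₀ = 0; rw [hu0, hu'0]; ring⟩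
  have h3 : Iφ ≤ 0 := hIφdef ▸ csInf_le (hX.bddBelow_image hφc) hmem0
  have h4 : 0 ≤ Sφ := hSφdef ▸ le_csSup (hX.bddAbove_image hφc) hmem0
  have habs : |u x - u' x| ≤ Sφ - Iφ := by
    rw [abs_le]
    constructor <;> linarith
  calc |(fun x => u x - u' x) x| = |u x - u' x| := rfl
    _ ≤ Sφ - Iφ := habs
    _ ≤ 2*ε*Real.exp (3*D/ε)*(tvDist α α' + tvDist β β') := hPG
end

section
/- Let W be a real Banach space with dual W*, D ⊂ W* a nonempty closed convex bounded set, and G : D → ℝ convex with finite directional derivatives G'(w; z−w) for all w, z ∈ D and finite curvature constant C_G = sup_{w,z∈D, γ∈[0,1]} (2/γ²)(G(w+γ(z−w)) − G(w) − γ G'(w; z−w)). Let (Δ_k) be nonnegative with Δ_k (k+2) nondecreasing, and define iterates w_{k+1} = w_k + (2/(k+2))(z_{k+1} − w_k) where z_{k+1} ∈ D satisfies G'(w_k; z_{k+1} − w_k) ≤ inf_{z∈D} G'(w_k; z − w_k) + Δ_k/2. Then for every k ≥ 1, G(w_k) − min_D G ≤ (2/(k+2)) C_G + Δ_k, provided the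 minimum of G on D is attained. -/
open Filter

set_option maxHeartbeats 1000000

theorem frank_wolfe_dual_banach_rate
    (W : Type*) [NormedAddCommGroup W] [NormedSpace ℝ W]
    (D : Set (StrongDual ℝ W)) (hDne : D.Nonempty) (hDcl : IsClosed D)
    (hDcx : Convex ℝ D) (hDbd : Bornology.IsBounded D)
    (G : StrongDual ℝ W → ℝ) (hG : ConvexOn ℝ D G)
    (G' : StrongDual ℝ W → StrongDual ℝ W → ℝ)
    (hG' : ∀ w ∈ D, ∀ z ∈ D,
      Tendsto (fun t : ℝ => (G (w + t • (z - w)) - G w) / t)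
        (nhdsWithin 0 (Set.Ioi 0)) (nhds (G' w (z - w))))
    (C : ℝ)
    (hC : ∀ w ∈ D, ∀ z ∈ D, ∀ γ ∈ Set.Ioc (0 : ℝ) 1,
      (2 / γ ^ 2) * (G (w + γ • (z - w)) - G w - γ * G' w (z - w)) ≤ C)
    (wk zk : ℕ → StrongDual ℝ W) (hw0 : wk 0 ∈ D)
    (Δ : ℕ → ℝ) (hΔ0 : ∀ k, 0 ≤ Δ k)
    (hΔmono : Monotone fun k : ℕ => Δ k * ((k : ℝ) + 2))
    (hzmem : ∀ k : ℕ, zk (k + 1) ∈ D)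
    (hzmin : ∀ k : ℕ, ∀ y ∈ D,
      G' (wk k) (zk (k + 1) - wk k) ≤ G' (wk k) (y - wk k) + Δ k / 2)
    (hrec : ∀ k : ℕ, wk (k + 1) = wk k + (2 / ((k : ℝ) + 2)) • (zk (k + 1) - wk k))
    (wstar : StrongDual ℝ W) (hstar : wstar ∈ D)
    (hmin : ∀ y ∈ D, G wstar ≤ G y) :
    ∀ k : ℕ, 1 ≤ k → G (wk k) - G wstar ≤ (2 / ((k : ℝ) + 2)) * C + Δ k := by
  -- combination identity
  have hcomb : ∀ (w z : StrongDual ℝ W) (t : ℝ),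
      w + t • (z - w) = (1 - t) • w + t • z := by
    intro w z t; module
  -- C is nonnegative
  have hC0 : 0 ≤ C := by
    have hzero : G' (wk 0) (wk 0 - wk 0) = 0 := by
      have h1 := hG' (wk 0) hw0 (wk 0) hw0
      have h2 : Tendsto (fun t : ℝ => (G (wk 0 + t • (wk 0 - wk 0)) - G (wk 0)) / t)
          (nhdsWithin 0 (Set.Ioi 0)) (nhds 0) := by
        have : (fun t : ℝ => (G (wk 0 + t • (wk 0 - wk 0)) - G (wk 0)) / t) = fun _ => 0 := by
          funext t; simp
        rw [this]; exact tendsto_const_nhds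
      exact tendsto_nhds_unique h1 h2
    have := hC (wk 0) hw0 (wk 0) hw0 1 ⟨one_pos, le_refl 1⟩
    rw [hzero] at this
    simpa using this
  -- directional derivative is below secant
  have hdd : ∀ w ∈ D, ∀ z ∈ D, G' w (z - w) ≤ G z - G w := by
    intro w hw z hz
    refine le_of_tendsto (hG' w hw z hz) ?_
    filter_upwards [Ioc_mem_nhdsGT_of_mem (Set.mem_Ico.mpr ⟨le_refl (0:ℝ), one_pos⟩)]
      with t ht
    obtain ⟨ht0, ht1⟩ := ht
    rw [hcomb, div_le_iff₀ ht0]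
    have := hG.2 hw hz (by linarith : (0:ℝ) ≤ 1 - t) (le_of_lt ht0) (by ring)
    simp only [smul_eq_mul] at this
    nlinarith [this]
  -- membership of iterates
  have hmem : ∀ k, wk k ∈ D := by
    intro k
    induction k with
    | zero => exact hw0
    | succ k ih =>
      rw [hrec k, hcomb]
      have hk2 : (0:ℝ) < (k:ℝ) + 2 := by positivity
      have hγ0 : (0:ℝ) ≤ 2 / ((k:ℝ) + 2) := by positivity
      have hγ1 : 2 / ((k:ℝ) + 2) ≤ 1 := by
        rw [div_le_one hk2]; have : (0:ℝ) ≤ (k:ℝ) := Nat.cast_nonneg k; linarith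
      exact hDcx ih (hzmem k) (by linarith) hγ0 (by ring)
  -- one-step inequality
  have hstep : ∀ k : ℕ,
      G (wk (k + 1)) ≤ G (wk k) + (2 / ((k:ℝ) + 2)) * (G wstar - G (wk k) + Δ k / 2)
        + (2 / ((k:ℝ) + 2)) ^ 2 * C / 2 := by
    intro k
    set γ : ℝ := 2 / ((k:ℝ) + 2) with hγdef
    have hk2 : (0:ℝ) < (k:ℝ) + 2 := by positivity
    have hγ0 : (0:ℝ) < γ := by positivity
    have hγ1 : γ ≤ 1 := by
      rw [hγdef, div_le_one hk2]; have : (0:ℝ) ≤ (k:ℝ) := Nat.cast_nonneg k; linarith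
    have hcurv := hC (wk k) (hmem k) (zk (k + 1)) (hzmem k) γ ⟨hγ0, hγ1⟩
    have hgd : G' (wk k) (zk (k + 1) - wk k) ≤ G wstar - G (wk k) + Δ k / 2 := by
      have h1 := hzmin k wstar hstar
      have h2 := hdd (wk k) (hmem k) wstar hstar
      linarith
    have hrw : wk (k + 1) = wk k + γ • (zk (k + 1) - wk k) := hrec k
    rw [hrw]
    have hγ2 : (0:ℝ) < γ ^ 2 := by positivity
    rw [div_mul_eq_mul_div, div_le_iff₀ hγ2] at hcurv
    have h3 := mul_le_mul_of_nonneg_left hgd (le_of_lt hγ0)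
    nlinarith [hcurv, h3]
  -- main induction
  intro k hk
  induction k, hk using Nat.le_induction with
  | base =>
    have h := hstep 0
    norm_num at h
    have hΔm := hΔmono (show (0:ℕ) ≤ 1 by norm_num)
    simp only [Nat.cast_zero, Nat.cast_one] at hΔm
    have h1 := hΔ0 1
    norm_num
    linarith
  | succ k hk ih =>
    have h := hstep k
    obtain ⟨n, hn⟩ : ∃ n : ℝ, n = (k : ℝ) := ⟨_, rfl⟩
    rw [← hn] at h ih
    push_cast
    rw [← hn]
    have hn0 : (0:ℝ) ≤ n := by rw [hn]; exact Nat.cast_nonneg k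
    have hk2 : (0:ℝ) < n + 2 := by positivity
    have hk3 : (0:ℝ) < n + 3 := by positivity
    have hΔm := hΔmono (show k ≤ k + 1 by omega)
    simp only [Nat.cast_add, Nat.cast_one] at hΔm
    rw [← hn] at hΔm
    -- hΔm : Δ k * (n + 2) ≤ Δ (k+1) * (n + 1 + 2)
    have hγ : (0:ℝ) < 2 / (n + 2) := by positivity
    have hγ1 : 2 / (n + 2) ≤ 1 := by rw [div_le_one hk2]; linarith
    have hm := mul_le_mul_of_nonneg_left ih (by linarith : (0:ℝ) ≤ 1 - 2 / (n + 2))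
    have hineq : G (wk (k + 1)) - G wstar ≤
        (1 - 2 / (n + 2)) * (2 / (n + 2) * C + Δ k) + (2 / (n + 2)) * (Δ k / 2)
          + (2 / (n + 2)) ^ 2 * C / 2 := by nlinarith [h, hm]
    have hΔ1 := hΔ0 (k + 1)
    have hΔk := hΔ0 k
    have heq : (1 - 2 / (n + 2)) * (2 / (n + 2) * C + Δ k) + (2 / (n + 2)) * (Δ k / 2)
          + (2 / (n + 2)) ^ 2 * C / 2
        = (2 * (n + 1) / (n + 2) ^ 2) * C + Δ k * (n + 1) / (n + 2) := by
      field_simp; ring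
    have hc : 2 * (n + 1) / (n + 2) ^ 2 ≤ 2 / (n + 3) := by
      rw [div_le_div_iff₀ (pow_pos hk2 2) hk3]; nlinarith [hn0]
    have hd : Δ k * (n + 1) / (n + 2) ≤ Δ (k + 1) := by
      rw [div_le_iff₀ hk2]
      nlinarith [mul_le_mul_of_nonneg_right hΔm (le_of_lt hk2), hΔk, hk3]
    have hfin : n + 1 + 2 = n + 3 := by ring
    rw [hfin]
    calc G (wk (k + 1)) - G wstar
        ≤ (2 * (n + 1) / (n + 2) ^ 2) * C + Δ k * (n + 1) / (n + 2) := by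
          rw [← heq]; exact hineq
      _ ≤ 2 / (n + 3) * C + Δ (k + 1) :=
          add_le_add (mul_le_mul_of_nonneg_right hc hC0) hd
end

section
/- For every convex function G on D with gradient map ∇G, if u_k ∈ W satisfies ‖u_k − ∇G(w_k)‖ ≤ Δ₁/4 and z_{k+1} ∈ D satisfies ⟨u_k, z_{k+1}⟩ ≤ min_{z∈D} ⟨u_k, z⟩ + Δ₂/2, then G'(w_k; z_{k+1} − w_k) ≤ min_{z∈D} G'(w_k; z − w_k) + (Δ₁ · diam(D) + Δ₂)/2. -/
theorem inexact_gradient_linear_minimization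
    (W : Type*) [NormedAddCommGroup W] [NormedSpace ℝ W]
    (D : Set (StrongDual ℝ W)) (hDne : D.Nonempty) (hDcl : IsClosed D)
    (hDcx : Convex ℝ D) (hDbd : Bornology.IsBounded D)
    (G : StrongDual ℝ W → ℝ) (hG : ConvexOn ℝ D G)
    (G' : StrongDual ℝ W → StrongDual ℝ W → ℝ)
    (gradG : StrongDual ℝ W → W)
    (hgrad : ∀ w ∈ D, ∀ z ∈ D, G' w (z - w) = (z - w) (gradG w))
    (wk : StrongDual ℝ W) (hwk : wk ∈ D)
    (Δ₁ Δ₂ : ℝ) (hΔ₁ : 0 < Δ₁) (hΔ₂ : 0 < Δ₂)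
    (u : W) (hu : ‖u - gradG wk‖ ≤ Δ₁ / 4)
    (zk1 : StrongDual ℝ W) (hzk1 : zk1 ∈ D)
    (hzmin : ∀ z ∈ D, zk1 u ≤ z u + Δ₂ / 2) :
    ∀ z ∈ D, G' wk (zk1 - wk) ≤
      G' wk (z - wk) + (Δ₁ * Metric.diam D + Δ₂) / 2 := by
  intro z hz
  rw [hgrad wk hwk zk1 hzk1, hgrad wk hwk z hz]
  have hd : 0 ≤ Metric.diam D := Metric.diam_nonneg
  have h1 : ‖zk1 - wk‖ ≤ Metric.diam D := by
    rw [← dist_eq_norm]; exact Metric.dist_le_diam_of_mem hDbd hzk1 hwk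
  have h2 : ‖z - wk‖ ≤ Metric.diam D := by
    rw [← dist_eq_norm]; exact Metric.dist_le_diam_of_mem hDbd hz hwk
  have key : ∀ (f : StrongDual ℝ W) (v : W), f v ≤ ‖f‖ * ‖v‖ := fun f v =>
    le_trans (le_abs_self _) (by rw [← Real.norm_eq_abs]; exact f.le_opNorm v)
  have e1 : (zk1 - wk) (gradG wk) = (zk1 - wk) u + (zk1 - wk) (gradG wk - u) := by
    rw [map_sub]; ring
  have e2 : (z - wk) u = (z - wk) (gradG wk) + (z - wk) (u - gradG wk) := by
    rw [map_sub]; ring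
  have hB : (zk1 - wk) u ≤ (z - wk) u + Δ₂ / 2 := by
    have := hzmin z hz
    simp only [ContinuousLinearMap.sub_apply]
    linarith
  have hC : (z - wk) (u - gradG wk) ≤ ‖z - wk‖ * ‖u - gradG wk‖ := key _ _
  have hA : (zk1 - wk) (gradG wk - u) ≤ ‖zk1 - wk‖ * ‖u - gradG wk‖ := by
    have := key (zk1 - wk) (gradG wk - u)
    rwa [norm_sub_rev (gradG wk) u] at this
  nlinarith [mul_le_mul h1 hu (norm_nonneg (u - gradG wk)) hd,
    mul_le_mul h2 hu (norm_nonneg (u - gradG wk)) hd]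
end

section
/- Let H be a reproducing kernel Hilbert space on X with normalized kernel h (‖h(x,·)‖_H = 1 for all x), let β be a probability measure on X, and let x₁,…,x_n be i.i.d. samples from β with empirical measure β_n = (1/n)∑δ_{x_i}. Then for every τ ∈ (0,1], with probability at least 1 − τ, ‖h_{β_n} − h_β‖_H ≤ (4 log(3/τ))/√n, where h_μ = ∫ h(x,·) dμ(x) is the kernel mean embedding. -/
open MeasureTheory Real

lemma aux_sinh_le {x : ℝ} (hx : 0 ≤ x) : Real.sinh x ≤ x * Real.cosh x := by
  have hmono : MonotoneOn (fun y => y * Real.cosh y - Real.sinh y) (Set.Ici (0:ℝ)) := by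
    apply monotoneOn_of_deriv_nonneg (convex_Ici 0)
    · fun_prop
    · intro y _
      exact (((hasDerivAt_id y).mul (Real.hasDerivAt_cosh y)).sub
        (Real.hasDerivAt_sinh y)).differentiableAt.differentiableWithinAt
    · intro y hy
      rw [interior_Ici] at hy
      have hd : deriv (fun y => y * Real.cosh y - Real.sinh y) y = y * Real.sinh y := by
        have := (((hasDerivAt_id y).mul (Real.hasDerivAt_cosh y)).sub
          (Real.hasDerivAt_sinh y)).deriv
        simpa using this
      rw [hd]
      exact mul_nonneg hy.le (Real.sinh_nonneg_iff.2 hy.le)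
  have h0 := hmono (Set.self_mem_Ici) (Set.mem_Ici.2 hx) hx
  simpa using h0

lemma aux_cross {u v : ℝ} (hu : 0 < u) (huv : u ≤ v) : v * Real.sinh u ≤ u * Real.sinh v := by
  have hmono : MonotoneOn (fun t => u * Real.sinh t - t * Real.sinh u) (Set.Ici u) := by
    apply monotoneOn_of_deriv_nonneg (convex_Ici u)
    · fun_prop
    · intro y _
      exact (((Real.hasDerivAt_sinh y).const_mul u).sub
        ((hasDerivAt_id y).mul_const (Real.sinh u))).differentiableAt.differentiableWithinAt
    · intro y hy
      rw [interior_Ici] at hy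
      have hd : deriv (fun t => u * Real.sinh t - t * Real.sinh u) y
          = u * Real.cosh y - Real.sinh u := by
        have := (((Real.hasDerivAt_sinh y).const_mul u).sub
          ((hasDerivAt_id y).mul_const (Real.sinh u))).deriv
        simpa using this
      rw [hd, sub_nonneg]
      calc Real.sinh u ≤ u * Real.cosh u := aux_sinh_le hu.le
        _ ≤ u * Real.cosh y := by
            have : Real.cosh u ≤ Real.cosh y := by
              rw [Real.cosh_le_cosh]
              rw [abs_of_nonneg hu.le, abs_of_nonneg (hu.le.trans hy.le)]
              exact hy.le
            exact mul_le_mul_of_nonneg_left this hu.le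
  have := hmono (Set.self_mem_Ici) (Set.mem_Ici.2 huv) huv
  simp only [sub_self] at this
  linarith

lemma aux_convexOn (l : ℝ) (hl : 0 ≤ l) :
    ConvexOn ℝ (Set.Ici (0:ℝ)) (fun x => Real.cosh (l * Real.sqrt x)) := by
  rcases eq_or_lt_of_le hl with rfl | hl
  · simpa using convexOn_const 1 (convex_Ici (0:ℝ))
  have hder : ∀ x : ℝ, 0 < x → HasDerivAt (fun x => Real.cosh (l * Real.sqrt x))
      (Real.sinh (l * Real.sqrt x) * (l * (1 / (2 * Real.sqrt x)))) x := by
    intro x hx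
    have h1 : HasDerivAt (fun x : ℝ => l * Real.sqrt x) (l * (1 / (2 * Real.sqrt x))) x :=
      (Real.hasDerivAt_sqrt hx.ne').const_mul l
    exact (Real.hasDerivAt_cosh _).comp x h1
  apply MonotoneOn.convexOn_of_deriv (convex_Ici 0)
  · fun_prop
  · intro x hx
    rw [interior_Ici] at hx
    exact (hder x hx).differentiableAt.differentiableWithinAt
  · rw [interior_Ici]
    intro x hx y hy hxy
    rw [(hder x hx).deriv, (hder y hy).deriv]
    have hsx : 0 < Real.sqrt x := Real.sqrt_pos.2 hx
    have hsy : 0 < Real.sqrt y := Real.sqrt_pos.2 hy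
    have hs : Real.sqrt x ≤ Real.sqrt y := Real.sqrt_le_sqrt hxy
    have key := aux_cross (u := l * Real.sqrt x) (v := l * Real.sqrt y)
      (by positivity) (by nlinarith)
    have h2 : Real.sinh (l * Real.sqrt x) * Real.sqrt y
        ≤ Real.sinh (l * Real.sqrt y) * Real.sqrt x := by
      nlinarith [key, hl]
    calc Real.sinh (l * Real.sqrt x) * (l * (1 / (2 * Real.sqrt x)))
        = (Real.sinh (l * Real.sqrt x) * Real.sqrt y) * (l / (2 * Real.sqrt x * Real.sqrt y)) := by
          field_simp
      _ ≤ (Real.sinh (l * Real.sqrt y) * Real.sqrt x) * (l / (2 * Real.sqrt x * Real.sqrt y)) := by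
          apply mul_le_mul_of_nonneg_right h2 (by positivity)
      _ = Real.sinh (l * Real.sqrt y) * (l * (1 / (2 * Real.sqrt y))) := by
          field_simp

open scoped RealInnerProductSpace in
lemma aux_pointwise {H : Type*} [NormedAddCommGroup H] [InnerProductSpace ℝ H]
    (l : ℝ) (hl : 0 ≤ l) (c : ℝ) (hc : 0 < c) (s y : H) (hy : ‖y‖ ≤ c) :
    Real.cosh (l * ‖s + y‖) ≤ Real.cosh (l * ‖s‖) * Real.cosh (l * c)
      + (if ‖s‖ = 0 then 0 else
          (Real.cosh (l * (‖s‖ + c)) - Real.cosh (l * (‖s‖ - c))) / (2 * (2 * c * ‖s‖)))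
        * (2 * ⟪s, y⟫) := by
  by_cases hs : ‖s‖ = 0
  · have hs0 : s = 0 := norm_eq_zero.1 hs
    subst hs0
    rw [if_pos hs, zero_mul, add_zero, hs, mul_zero, Real.cosh_zero, one_mul, zero_add]
    rw [Real.cosh_le_cosh, abs_of_nonneg (mul_nonneg hl (norm_nonneg _)),
      abs_of_nonneg (mul_nonneg hl hc.le)]
    exact mul_le_mul_of_nonneg_left hy hl
  · rw [if_neg hs]
    set a := ‖s‖ with ha
    have ha0 : 0 < a := lt_of_le_of_ne (norm_nonneg s) (Ne.symm hs)
    set M := 2 * c * a with hM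
    have hM0 : 0 < M := by positivity
    set t := 2 * ⟪s, y⟫ with ht
    have htM : |t| ≤ M := by
      have h1 : |⟪s, y⟫| ≤ a * c := by
        calc |⟪s, y⟫| ≤ ‖s‖ * ‖y‖ := abs_real_inner_le_norm s y
          _ ≤ a * c := mul_le_mul_of_nonneg_left hy (norm_nonneg s)
      rw [ht, abs_mul, abs_two]
      rw [hM]; nlinarith
    set b := a ^ 2 + c ^ 2 with hb
    have hbM1 : b - M = (a - c) ^ 2 := by rw [hb, hM]; ring
    have hbM2 : b + M = (a + c) ^ 2 := by rw [hb, hM]; ring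
    have hsq : ‖s + y‖ ^ 2 ≤ b + t := by
      have := norm_add_sq_real s y
      have hy2 : ‖y‖ ^ 2 ≤ c ^ 2 := by nlinarith [norm_nonneg y]
      rw [this, hb, ht]; nlinarith
    -- monotone step
    have step1 : Real.cosh (l * ‖s + y‖) ≤ Real.cosh (l * Real.sqrt (b + t)) := by
      rw [Real.cosh_le_cosh, abs_of_nonneg (by positivity),
        abs_of_nonneg (by positivity)]
      apply mul_le_mul_of_nonneg_left _ hl
      calc ‖s + y‖ = Real.sqrt (‖s + y‖ ^ 2) := by
            rw [Real.sqrt_sq (norm_nonneg _)]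
        _ ≤ Real.sqrt (b + t) := Real.sqrt_le_sqrt hsq
    -- chord step
    have hbt0 : (0:ℝ) ≤ b - M := by rw [hbM1]; positivity
    have w1 : (0:ℝ) ≤ (M - t) / (2 * M) := by
      apply div_nonneg _ (by positivity)
      have := abs_le.1 htM; linarith
    have w2 : (0:ℝ) ≤ (M + t) / (2 * M) := by
      apply div_nonneg _ (by positivity)
      have := abs_le.1 htM; linarith
    have wsum : (M - t) / (2 * M) + (M + t) / (2 * M) = 1 := by
      field_simp; ring
    have hcomb : (M - t) / (2 * M) * (b - M) + (M + t) / (2 * M) * (b + M) = b + t := by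
      field_simp; ring
    have chord := (aux_convexOn l hl).2 (Set.mem_Ici.2 hbt0)
      (Set.mem_Ici.2 (by positivity : (0:ℝ) ≤ b + M)) w1 w2 wsum
    simp only [smul_eq_mul] at chord
    rw [hcomb] at chord
    have e1 : Real.sqrt (b - M) = |a - c| := by
      rw [hbM1, Real.sqrt_sq_eq_abs]
    have e2 : Real.sqrt (b + M) = a + c := by
      rw [hbM2, Real.sqrt_sq (by positivity)]
    have e1' : Real.cosh (l * Real.sqrt (b - M)) = Real.cosh (l * (a - c)) := by
      rw [e1, ← Real.cosh_abs (l * (a - c)), abs_mul, abs_of_nonneg hl]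
    have e2' : Real.cosh (l * Real.sqrt (b + M)) = Real.cosh (l * (a + c)) := by rw [e2]
    rw [e1', e2'] at chord
    have prodid : Real.cosh (l * (a - c)) + Real.cosh (l * (a + c))
        = 2 * (Real.cosh (l * a) * Real.cosh (l * c)) := by
      have h1 : l * (a + c) = l * a + l * c := by ring
      have h2 : l * (a - c) = l * a - l * c := by ring
      rw [h1, h2, Real.cosh_add, Real.cosh_sub]; ring
    calc Real.cosh (l * ‖s + y‖) ≤ Real.cosh (l * Real.sqrt (b + t)) := step1
      _ ≤ (M - t) / (2 * M) * Real.cosh (l * (a - c))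
          + (M + t) / (2 * M) * Real.cosh (l * (a + c)) := chord
      _ = (Real.cosh (l * (a - c)) + Real.cosh (l * (a + c))) / 2
          + (Real.cosh (l * (a + c)) - Real.cosh (l * (a - c))) / (2 * M) * t := by
          field_simp
          ring
      _ = Real.cosh (l * a) * Real.cosh (l * c)
          + (Real.cosh (l * (a + c)) - Real.cosh (l * (a - c))) / (2 * M) * t := by
          rw [prodid]; ring
      _ = _ := by rw [ht]

open scoped RealInnerProductSpace in
lemma aux_step {α : Type*} [MeasurableSpace α] (ν : Measure α) [IsProbabilityMeasure ν]
    {H : Type*} [NormedAddCommGroup H] [InnerProductSpace ℝ H] [CompleteSpace H]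
    (g : α → H) (hgi : Integrable g ν) (hgb : ∀ x, ‖g x‖ ≤ 2) (hgm : ∫ x, g x ∂ν = 0)
    (l : ℝ) (hl : 0 ≤ l) (s : H)
    (hfi : Integrable (fun x => Real.cosh (l * ‖s + g x‖)) ν) :
    ∫ x, Real.cosh (l * ‖s + g x‖) ∂ν ≤ Real.cosh (l * ‖s‖) * Real.cosh (l * 2) := by
  set B : ℝ := if ‖s‖ = 0 then 0 else
    (Real.cosh (l * (‖s‖ + 2)) - Real.cosh (l * (‖s‖ - 2))) / (2 * (2 * 2 * ‖s‖)) with hB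
  have hpt : ∀ x, Real.cosh (l * ‖s + g x‖)
      ≤ Real.cosh (l * ‖s‖) * Real.cosh (l * 2) + B * (2 * ⟪s, g x⟫) := fun x =>
    aux_pointwise l hl 2 two_pos s (g x) (hgb x)
  have hinner : Integrable (fun x => ⟪s, g x⟫) ν := hgi.const_inner s
  have hrhs : Integrable
      (fun x => Real.cosh (l * ‖s‖) * Real.cosh (l * 2) + B * (2 * ⟪s, g x⟫)) ν := by
    apply (integrable_const _).add
    exact ((hinner.const_mul 2).const_mul B)
  calc ∫ x, Real.cosh (l * ‖s + g x‖) ∂ν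
      ≤ ∫ x, (Real.cosh (l * ‖s‖) * Real.cosh (l * 2) + B * (2 * ⟪s, g x⟫)) ∂ν :=
        integral_mono hfi hrhs hpt
    _ = Real.cosh (l * ‖s‖) * Real.cosh (l * 2)
        + B * (2 * ⟪s, ∫ x, g x ∂ν⟫) := by
        rw [integral_add (integrable_const _) ((hinner.const_mul 2).const_mul B),
          integral_const, probReal_univ, one_smul,
          integral_const_mul, integral_const_mul, integral_inner hgi]
    _ = Real.cosh (l * ‖s‖) * Real.cosh (l * 2) := by
        rw [hgm, inner_zero_right]; ring

lemma aux_iter {E : Type*} [MetricSpace E] [CompactSpace E] [MeasurableSpace E] [BorelSpace E]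
    {H : Type*} [NormedAddCommGroup H] [InnerProductSpace ℝ H] [CompleteSpace H]
    (ν : Measure E) [IsProbabilityMeasure ν]
    (g : E → H) (hg : Continuous g) (hgb : ∀ x, ‖g x‖ ≤ 2) (hgm : ∫ x, g x ∂ν = 0)
    (l : ℝ) (hl : 0 ≤ l) :
    ∀ (m : ℕ) (s : H),
      ∫ ω, Real.cosh (l * ‖s + ∑ i, g (ω i)‖) ∂(Measure.pi fun _ : Fin m => ν)
        ≤ Real.cosh (l * ‖s‖) * Real.cosh (l * 2) ^ m := by
  have hgi : Integrable g ν :=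
    ⟨hg.aestronglyMeasurable, HasFiniteIntegral.of_bounded (ae_of_all _ hgb)⟩
  have hfi : ∀ s : H, Integrable (fun x => Real.cosh (l * ‖s + g x‖)) ν := by
    intro s
    refine ⟨?_, HasFiniteIntegral.of_bounded
      (C := Real.cosh (l * (‖s‖ + 2))) (ae_of_all _ fun x => ?_)⟩
    · exact (Real.continuous_cosh.comp
        (continuous_const.mul (continuous_const.add hg).norm)).aestronglyMeasurable
    · rw [Real.norm_eq_abs, abs_of_pos (Real.cosh_pos _), Real.cosh_le_cosh,
        abs_of_nonneg (mul_nonneg hl (norm_nonneg _)),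
        abs_of_nonneg (mul_nonneg hl (by positivity))]
      apply mul_le_mul_of_nonneg_left _ hl
      calc ‖s + g x‖ ≤ ‖s‖ + ‖g x‖ := norm_add_le _ _
        _ ≤ ‖s‖ + 2 := by linarith [hgb x]
  intro m
  induction m with
  | zero => intro s; simp
  | succ m ih =>
    intro s
    set P := Measure.pi fun _ : Fin m => ν with hP
    set e := MeasurableEquiv.piFinSuccAbove (fun _ : Fin (m + 1) => E) 0 with he
    have hmp : MeasurePreserving e (Measure.pi fun _ : Fin (m + 1) => ν) (ν.prod P) :=
      measurePreserving_piFinSuccAbove (fun _ : Fin (m + 1) => ν) 0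
    set G : E × (Fin m → E) → ℝ :=
      fun q => Real.cosh (l * ‖s + g q.1 + ∑ j, g (q.2 j)‖) with hG
    have hGcont : Continuous G := by
      apply Real.continuous_cosh.comp
      apply continuous_const.mul
      apply Continuous.norm
      exact (continuous_const.add (hg.comp continuous_fst)).add
        (continuous_finset_sum _ fun j _ => hg.comp ((continuous_apply j).comp continuous_snd))
    have hsum_le : ∀ p : Fin m → E, ‖∑ j, g (p j)‖ ≤ 2 * m := by
      intro p
      calc ‖∑ j, g (p j)‖ ≤ ∑ j, ‖g (p j)‖ := norm_sum_le _ _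
        _ ≤ ∑ _j : Fin m, (2:ℝ) := Finset.sum_le_sum fun j _ => hgb _
        _ = 2 * m := by simp [mul_comm]
    have hGint : Integrable G (ν.prod P) := by
      refine ⟨hGcont.aestronglyMeasurable, HasFiniteIntegral.of_bounded
        (C := Real.cosh (l * (‖s‖ + 2 + 2 * m))) (ae_of_all _ fun q => ?_)⟩
      rw [Real.norm_eq_abs, abs_of_pos (Real.cosh_pos _), Real.cosh_le_cosh,
        abs_of_nonneg (mul_nonneg hl (norm_nonneg _)),
        abs_of_nonneg (mul_nonneg hl (by positivity))]
      apply mul_le_mul_of_nonneg_left _ hl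
      calc ‖s + g q.1 + ∑ j, g (q.2 j)‖ ≤ ‖s + g q.1‖ + ‖∑ j, g (q.2 j)‖ := norm_add_le _ _
        _ ≤ (‖s‖ + ‖g q.1‖) + 2 * m := add_le_add (norm_add_le _ _) (hsum_le q.2)
        _ ≤ ‖s‖ + 2 + 2 * m := by linarith [hgb q.1]
    have h1 : ∫ ω, Real.cosh (l * ‖s + ∑ i, g (ω i)‖) ∂(Measure.pi fun _ : Fin (m + 1) => ν)
        = ∫ q, G q ∂(ν.prod P) := by
      rw [← hmp.integral_comp' G]
      apply integral_congr_ae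
      filter_upwards with ω
      simp only [hG, he, MeasurableEquiv.piFinSuccAbove_apply, Fin.zero_succAbove,
        Fin.sum_univ_succ, add_assoc, Fin.insertNthEquiv_zero, Fin.consEquiv_symm_apply,
        Fin.tail]
    rw [h1, integral_prod _ hGint]
    have hinner : ∀ x : E, ∫ p, G (x, p) ∂P
        ≤ Real.cosh (l * ‖s + g x‖) * Real.cosh (l * 2) ^ m := fun x => ih (s + g x)
    calc ∫ x, ∫ p, G (x, p) ∂P ∂ν
        ≤ ∫ x, Real.cosh (l * ‖s + g x‖) * Real.cosh (l * 2) ^ m ∂ν := by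
          refine integral_mono hGint.integral_prod_left ((hfi s).mul_const _) hinner
      _ = (∫ x, Real.cosh (l * ‖s + g x‖) ∂ν) * Real.cosh (l * 2) ^ m :=
          integral_mul_const _ _
      _ ≤ (Real.cosh (l * ‖s‖) * Real.cosh (l * 2)) * Real.cosh (l * 2) ^ m := by
          exact mul_le_mul_of_nonneg_right (aux_step ν g hgi hgb hgm l hl s (hfi s))
            (pow_nonneg (Real.cosh_pos _).le m)
      _ = Real.cosh (l * ‖s‖) * Real.cosh (l * 2) ^ (m + 1) := by ring

set_option maxHeartbeats 1000000 in
theorem kernel_mean_embedding_concentration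
    (E : Type*) [MetricSpace E] [CompactSpace E]
    [MeasurableSpace E] [BorelSpace E]
    (H : Type*) [NormedAddCommGroup H] [InnerProductSpace ℝ H] [CompleteSpace H]
    (h : E → H) (hcont : Continuous h) (hnorm : ∀ x, ‖h x‖ = 1)
    (β : Measure E) [IsProbabilityMeasure β]
    (n : ℕ) (hn : 0 < n) (τ : ℝ) (hτ : τ ∈ Set.Ioc (0 : ℝ) 1) :
    ENNReal.ofReal (1 - τ) ≤
      (Measure.pi fun _ : Fin n => β)
        {ω : Fin n → E |
          ‖(n : ℝ)⁻¹ • (∑ i, h (ω i)) - ∫ x, h x ∂β‖ ≤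
            4 * Real.log (3 / τ) / Real.sqrt n} := by
  obtain ⟨hτ0, hτ1⟩ := hτ
  set μH := ∫ x, h x ∂β with hμH
  have hβh : Integrable h β :=
    ⟨hcont.aestronglyMeasurable,
      HasFiniteIntegral.of_bounded (C := 1) (ae_of_all _ fun x => (hnorm x).le)⟩
  have hμHle : ‖μH‖ ≤ 1 := by
    calc ‖μH‖ ≤ ∫ x, ‖h x‖ ∂β := norm_integral_le_integral_norm _
      _ = 1 := by simp [hnorm]
  set g : E → H := fun x => h x - μH with hgdef
  have hgc : Continuous g := hcont.sub continuous_const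
  have hgb : ∀ x, ‖g x‖ ≤ 2 := fun x => by
    calc ‖h x - μH‖ ≤ ‖h x‖ + ‖μH‖ := norm_sub_le _ _
      _ ≤ 2 := by rw [hnorm x]; linarith
  have hgm : ∫ x, g x ∂β = 0 := by
    rw [hgdef]
    rw [integral_sub hβh (integrable_const _), integral_const, probReal_univ,
      one_smul, ← hμH, sub_self]
  set L := Real.log (3 / τ) with hLdef
  have hL1 : 1 ≤ L := by
    rw [hLdef, Real.le_log_iff_exp_le (by positivity)]
    calc Real.exp 1 ≤ 3 := by nlinarith [Real.exp_one_lt_d9]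
      _ ≤ 3 / τ := by rw [le_div_iff₀ hτ0]; nlinarith
  set P := Measure.pi fun _ : Fin n => β with hPdef
  have hn' : (0:ℝ) < n := Nat.cast_pos.2 hn
  have hsn : (0:ℝ) < Real.sqrt n := Real.sqrt_pos.2 hn'
  have hid : ∀ ω : Fin n → E,
      (n : ℝ)⁻¹ • (∑ i, h (ω i)) - μH = (n : ℝ)⁻¹ • (∑ i, g (ω i)) := by
    intro ω
    simp only [hgdef, Finset.sum_sub_distrib, smul_sub, Finset.sum_const,
      Finset.card_univ, Fintype.card_fin]
    congr 1
    rw [← Nat.cast_smul_eq_nsmul ℝ, smul_smul, inv_mul_cancel₀ hn'.ne', one_smul]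
  have hSb : ∀ ω : Fin n → E, ‖∑ i, g (ω i)‖ ≤ 2 * n := by
    intro ω
    calc ‖∑ i, g (ω i)‖ ≤ ∑ i, ‖g (ω i)‖ := norm_sum_le _ _
      _ ≤ ∑ _i : Fin n, (2:ℝ) := Finset.sum_le_sum fun i _ => hgb _
      _ = 2 * n := by simp [mul_comm]
  by_cases hcase : Real.sqrt n ≤ 2 * L
  · -- deterministic case
    have hall : ∀ ω : Fin n → E,
        ‖(n : ℝ)⁻¹ • (∑ i, h (ω i)) - μH‖ ≤ 4 * L / Real.sqrt n := by
      intro ω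
      rw [hid ω, norm_smul, Real.norm_eq_abs, abs_of_pos (inv_pos.2 hn')]
      calc (n:ℝ)⁻¹ * ‖∑ i, g (ω i)‖ ≤ (n:ℝ)⁻¹ * (2 * n) :=
            mul_le_mul_of_nonneg_left (hSb ω) (inv_pos.2 hn').le
        _ = 2 := by field_simp
        _ ≤ 4 * L / Real.sqrt n := by
            rw [le_div_iff₀ hsn]; nlinarith
    calc ENNReal.ofReal (1 - τ) ≤ 1 := by
          rw [← ENNReal.ofReal_one]; exact ENNReal.ofReal_le_ofReal (by linarith)
      _ = P Set.univ := measure_univ.symm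
      _ ≤ _ := measure_mono fun ω _ => hall ω
  · push_neg at hcase
    set l := L / Real.sqrt n with hldef
    have hl0 : 0 < l := div_pos (by linarith) hsn
    have hiter := aux_iter β g hgc hgb hgm l hl0.le n 0
    have hint : ∫ ω, Real.cosh (l * ‖∑ i, g (ω i)‖) ∂P ≤ Real.cosh (l * 2) ^ n := by
      simpa using hiter
    set f : (Fin n → E) → ℝ := fun ω => Real.cosh (l * ‖∑ i, g (ω i)‖) with hfdef
    have hfcont : Continuous f := by
      apply Real.continuous_cosh.comp
      apply continuous_const.mul
      exact (continuous_finset_sum _ fun i _ => hgc.comp (continuous_apply i)).norm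
    have hfint : Integrable f P := by
      refine ⟨hfcont.aestronglyMeasurable, HasFiniteIntegral.of_bounded
        (C := Real.cosh (l * (2 * n))) (ae_of_all _ fun ω => ?_)⟩
      rw [hfdef]
      simp only [Real.norm_eq_abs, abs_of_pos (Real.cosh_pos _)]
      rw [Real.cosh_le_cosh, abs_of_nonneg (mul_nonneg hl0.le (norm_nonneg _)),
        abs_of_nonneg (mul_nonneg hl0.le (by positivity))]
      exact mul_le_mul_of_nonneg_left (hSb ω) hl0.le
    set K := Real.cosh (l * (4 * L * Real.sqrt n)) with hKdef
    have hK0 : 0 < K := Real.cosh_pos _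
    have hmark := mul_meas_ge_le_integral_of_nonneg
      (ae_of_all P fun ω => (Real.cosh_pos (l * ‖∑ i, g (ω i)‖)).le) hfint K
    have htoReal : (P {ω | K ≤ f ω}).toReal ≤ Real.cosh (l * 2) ^ n / K := by
      rw [le_div_iff₀ hK0]
      calc (P {ω | K ≤ f ω}).toReal * K = K * (P {ω | K ≤ f ω}).toReal := mul_comm _ _
        _ ≤ ∫ ω, f ω ∂P := hmark
        _ ≤ Real.cosh (l * 2) ^ n := hint
    -- arithmetic
    have hsq : Real.sqrt n ^ 2 = (n:ℝ) := Real.sq_sqrt hn'.le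
    have harg1 : (n:ℝ) * ((l * 2) ^ 2 / 2) = 2 * L ^ 2 := by
      rw [hldef]
      field_simp
      nlinarith [hsq]
    have e1 : Real.cosh (l * 2) ^ n ≤ Real.exp (2 * L ^ 2) := by
      calc Real.cosh (l * 2) ^ n ≤ Real.exp ((l * 2) ^ 2 / 2) ^ n :=
            pow_le_pow_left₀ (Real.cosh_pos _).le (Real.cosh_le_exp_half_sq _) n
        _ = Real.exp ((n:ℝ) * ((l * 2) ^ 2 / 2)) := by
            rw [Real.exp_nat_mul]
        _ = Real.exp (2 * L ^ 2) := by rw [harg1]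
    have harg2 : l * (4 * L * Real.sqrt n) = 4 * L ^ 2 := by
      rw [hldef]; field_simp
    have e2 : Real.exp (4 * L ^ 2) / 2 ≤ K := by
      rw [hKdef, harg2, Real.cosh_eq]
      linarith [Real.exp_pos (-(4 * L ^ 2))]
    have hτe : Real.exp (-L) = τ / 3 := by
      rw [Real.exp_neg, hLdef, Real.exp_log (by positivity), inv_div]
    have hfinal : Real.cosh (l * 2) ^ n / K ≤ τ := by
      have hd : Real.cosh (l * 2) ^ n / K ≤ Real.exp (2 * L ^ 2) / (Real.exp (4 * L ^ 2) / 2) :=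
        div_le_div₀ (Real.exp_nonneg _) e1 (by positivity) e2
      have he : Real.exp (2 * L ^ 2) / (Real.exp (4 * L ^ 2) / 2)
          = 2 * Real.exp (2 * L ^ 2 - 4 * L ^ 2) := by
        rw [Real.exp_sub]; field_simp
      have hee : Real.exp (2 * L ^ 2 - 4 * L ^ 2) ≤ Real.exp (-L) * Real.exp (-L) := by
        rw [← Real.exp_add]
        apply Real.exp_le_exp.2
        have hLL : L * 1 ≤ L * L := mul_le_mul_of_nonneg_left hL1 (by linarith)
        nlinarith [hLL]
      rw [he] at hd
      rw [hτe] at hee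
      have hτsq : τ * τ ≤ 1 * τ := mul_le_mul_of_nonneg_right hτ1 hτ0.le
      calc Real.cosh (l * 2) ^ n / K ≤ 2 * Real.exp (2 * L ^ 2 - 4 * L ^ 2) := hd
        _ ≤ 2 * (τ / 3 * (τ / 3)) := by linarith [hee]
        _ ≤ τ := by nlinarith [hτsq, hτ0.le]
    have hPB : P {ω | K ≤ f ω} ≤ ENNReal.ofReal τ := by
      calc P {ω | K ≤ f ω} = ENNReal.ofReal (P {ω | K ≤ f ω}).toReal :=
            (ENNReal.ofReal_toReal (measure_ne_top P _)).symm
        _ ≤ ENNReal.ofReal τ := ENNReal.ofReal_le_ofReal (le_trans htoReal hfinal)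
    have hsub : {ω : Fin n → E |
        ‖(n : ℝ)⁻¹ • (∑ i, h (ω i)) - μH‖ ≤ 4 * L / Real.sqrt n}ᶜ ⊆ {ω | K ≤ f ω} := by
      intro ω hω
      simp only [Set.mem_compl_iff, Set.mem_setOf_eq, not_le] at hω
      rw [hid ω, norm_smul, Real.norm_eq_abs, abs_of_pos (inv_pos.2 hn')] at hω
      have h2 : 4 * L * Real.sqrt n ≤ ‖∑ i, g (ω i)‖ := by
        have h3 := mul_lt_mul_of_pos_right hω hn'
        have h4 : (n:ℝ)⁻¹ * ‖∑ i, g (ω i)‖ * n = ‖∑ i, g (ω i)‖ := by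
          field_simp
        have h5 : 4 * L / Real.sqrt n * n = 4 * L * Real.sqrt n := by
          rw [div_mul_eq_mul_div, mul_div_assoc]
          congr 1
          rw [Real.div_sqrt]
        rw [h4, h5] at h3
        exact h3.le
      show K ≤ f ω
      rw [hKdef, hfdef, Real.cosh_le_cosh,
        abs_of_nonneg (mul_nonneg hl0.le (by positivity)),
        abs_of_nonneg (mul_nonneg hl0.le (norm_nonneg _))]
      exact mul_le_mul_of_nonneg_left h2 hl0.le
    have hA : MeasurableSet {ω : Fin n → E |
        ‖(n : ℝ)⁻¹ • (∑ i, h (ω i)) - μH‖ ≤ 4 * L / Real.sqrt n} := by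
      have hφ : Continuous fun ω : Fin n → E =>
          ‖(n : ℝ)⁻¹ • (∑ i, h (ω i)) - μH‖ := by
        apply Continuous.norm
        exact ((continuous_finset_sum _ fun i _ =>
          hcont.comp (continuous_apply i)).const_smul _).sub continuous_const
      exact (isClosed_le hφ continuous_const).measurableSet
    have hcompl : P {ω : Fin n → E |
        ‖(n : ℝ)⁻¹ • (∑ i, h (ω i)) - μH‖ ≤ 4 * L / Real.sqrt n}ᶜ ≤ ENNReal.ofReal τ :=
      le_trans (measure_mono hsub) hPB
    rw [← ENNReal.add_le_add_iff_right (measure_ne_top P ({ω : Fin n → E |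
        ‖(n : ℝ)⁻¹ • (∑ i, h (ω i)) - μH‖ ≤ 4 * L / Real.sqrt n}ᶜ))]
    calc ENNReal.ofReal (1 - τ) + P _ᶜ
        ≤ ENNReal.ofReal (1 - τ) + ENNReal.ofReal τ := by gcongr
      _ = ENNReal.ofReal 1 := by
          rw [← ENNReal.ofReal_add (by linarith) hτ0.le]; norm_num
      _ = 1 := ENNReal.ofReal_one
      _ = P _ + P _ᶜ := (prob_add_prob_compl hA).symm
end
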